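/- arXiv:2110.05708 — 14 statements merged into one kernel-verified Lean document; each statement's English description precedes it below -/
import Mathlib

section
/- Let σ > 0, let m be a positive integer, let ε ∈ (0,1), and let δ > 0 satisfy δ ≤ min(1/2, σ) and 2^m · δ ≥ 2σ/√ε. Set σ̃ := σ/δ, 𝒩 := (σ√(2π))^{1/2} and Ñ := δ · ( Σ_{j=−2^{m−1}}^{2^{m−1}−1} exp(−j²/(2σ̃²)) )^{1/2}. Then (1/(𝒩·Ñ)) · Σ_{j=−2^{m−1}}^{2^{m−1}−1} δ · exp(−j²/(2σ̃²)) ≥ 1 − ε. (This is the fidelity bound between the continuous one-dimensional Gaussian state with standard deviation σ and its discretization on a lattice with 2^m points and spacing δ.) -/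
open Finset

/-- cubic lower bound for `exp (-s)` on `0 ≤ s ≤ 1`, via `Real.exp_bound`. -/
private lemma exp_cubic_aux {s : ℝ} (h0 : 0 ≤ s) (h1 : s ≤ 1) :
    1 - s + s^2/2 - s^3/6 ≤ Real.exp (-s) := by
  have habs : |(-s)| ≤ 1 := by rw [abs_neg, abs_of_nonneg h0]; exact h1
  have hb := Real.exp_bound habs (n := 6) (by norm_num)
  have hsum : ∑ m ∈ range 6, (-s) ^ m / (Nat.factorial m : ℝ)
      = 1 - s + s^2/2 - s^3/6 + s^4/24 - s^5/120 := by
    simp [Finset.sum_range_succ, Nat.factorial]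
    ring
  rw [hsum] at hb
  have habs6 : |(-s)| ^ 6 * (((6:ℕ).succ : ℝ) / ((Nat.factorial 6 : ℝ) * (6:ℕ)))
      = s^6 * (7/4320) := by
    rw [abs_neg, abs_of_nonneg h0]
    norm_num [Nat.factorial]
  rw [habs6] at hb
  have hlow := (abs_le.mp hb).1
  have htail : 0 ≤ s^4/24 - s^5/120 - s^6 * (7/4320) := by
    nlinarith [pow_nonneg h0 4, pow_nonneg h0 5, pow_nonneg h0 6]
  linarith

/-- cubic lower bound for `exp (-s)` for all `s ≥ 0`. -/
private lemma exp_cubic {s : ℝ} (h0 : 0 ≤ s) :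
    1 - s + s^2/2 - s^3/6 ≤ Real.exp (-s) := by
  rcases le_or_gt s 1 with h | h
  · exact exp_cubic_aux h0 h
  rcases le_or_gt s (3/2) with h32 | h32
  · have hu0 : (0:ℝ) ≤ s/2 := by linarith
    have hu1 : s/2 ≤ 1 := by linarith
    have hP := exp_cubic_aux hu0 hu1
    have hPpos : 0 ≤ 1 - s/2 + (s/2)^2/2 - (s/2)^3/6 := by nlinarith
    have hsq : (1 - s/2 + (s/2)^2/2 - (s/2)^3/6)^2 ≤ (Real.exp (-(s/2)))^2 :=
      pow_le_pow_left₀ hPpos hP 2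
    have hexp2 : (Real.exp (-(s/2)))^2 = Real.exp (-s) := by
      rw [sq, ← Real.exp_add]; congr 1; ring
    rw [hexp2] at hsq
    nlinarith [hsq, mul_nonneg (pow_nonneg hu0 4) (sq_nonneg (s/2/6 - 1/2)),
      pow_nonneg hu0 4]
  rcases le_or_gt s 2 with h2 | h2
  · have h1' : 1 - s/2 ≤ Real.exp (-(s/2)) := by
      have := Real.add_one_le_exp (-(s/2)); linarith
    have hnn : (0:ℝ) ≤ 1 - s/2 := by linarith
    have hsq : (1 - s/2)^2 ≤ (Real.exp (-(s/2)))^2 := pow_le_pow_left₀ hnn h1' 2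
    have hexp2 : (Real.exp (-(s/2)))^2 = Real.exp (-s) := by
      rw [sq, ← Real.exp_add]; congr 1; ring
    rw [hexp2] at hsq
    nlinarith [hsq, mul_nonneg (sq_nonneg s) h0]
  · have : 1 - s + s^2/2 - s^3/6 ≤ 0 := by nlinarith [sq_nonneg (s-2), sq_nonneg s]
    linarith [(Real.exp_pos (-s)).le]

/-- closed form for the sum of `1 - i²/(2t²)`. -/
private lemma sumP1 (t : ℝ) (n : ℕ) :
    ∑ i ∈ range n, (1 - (i:ℝ)^2/(2*t^2))
      = (n:ℝ) - ((n:ℝ)^3/3 - (n:ℝ)^2/2 + (n:ℝ)/6)/(2*t^2) := by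
  induction n with
  | zero => simp
  | succ k ih =>
    rw [Finset.sum_range_succ, ih]
    push_cast
    ring

/-- closed form for the sum of the cubic lower bounds. -/
private lemma sumP3 (t : ℝ) (n : ℕ) :
    ∑ i ∈ range n, (1 - (i:ℝ)^2/(2*t^2) + ((i:ℝ)^2/(2*t^2))^2/2 - ((i:ℝ)^2/(2*t^2))^3/6)
      = (n:ℝ) - ((n:ℝ)^3/3 - (n:ℝ)^2/2 + (n:ℝ)/6)/(2*t^2)
        + ((n:ℝ)^5/5 - (n:ℝ)^4/2 + (n:ℝ)^3/3 - (n:ℝ)/30)/(8*t^4)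
        - ((n:ℝ)^7/7 - (n:ℝ)^6/2 + (n:ℝ)^5/2 - (n:ℝ)^3/6 + (n:ℝ)/42)/(48*t^6) := by
  induction n with
  | zero => simp
  | succ k ih =>
    rw [Finset.sum_range_succ, ih]
    push_cast
    ring

/-- symmetric splitting of the lattice sum. -/
private lemma two_sided (t : ℝ) : ∀ n : ℕ,
    ∑ j ∈ Finset.Icc (-(n:ℤ)) ((n:ℤ)-1), Real.exp (-(j:ℝ)^2/(2*t^2))
      = ∑ i ∈ range n,
          (Real.exp (-(i:ℝ)^2/(2*t^2)) + Real.exp (-((i+1:ℕ):ℝ)^2/(2*t^2)))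
  | 0 => by simp
  | (n+1) => by
    have h1 : Finset.Icc (-((n+1:ℕ):ℤ)) (((n+1:ℕ):ℤ)-1)
        = insert (-(n:ℤ)-1) (insert (n:ℤ) (Finset.Icc (-(n:ℤ)) ((n:ℤ)-1))) := by
      ext j
      simp only [Finset.mem_Icc, Finset.mem_insert]
      push_cast
      omega
    have h2 : (-(n:ℤ)-1) ∉ insert (n:ℤ) (Finset.Icc (-(n:ℤ)) ((n:ℤ)-1)) := by
      simp only [Finset.mem_insert, Finset.mem_Icc]
      omega
    have h3 : (n:ℤ) ∉ Finset.Icc (-(n:ℤ)) ((n:ℤ)-1) := by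
      simp only [Finset.mem_Icc]; omega
    rw [h1, Finset.sum_insert h2, Finset.sum_insert h3, two_sided t n,
      Finset.sum_range_succ]
    have e1 : ((-(n:ℤ)-1 : ℤ) : ℝ)^2 = ((n+1:ℕ):ℝ)^2 := by push_cast; ring
    have e2 : (((n:ℤ)) : ℝ)^2 = ((n:ℕ):ℝ)^2 := by push_cast; ring
    rw [e1, e2]
    ring

/-- lower bound for the full lattice sum in terms of a one-sided sum. -/
private lemma sum_lower (t : ℝ) (K : ℤ) (n : ℕ) (hn : (n:ℤ) ≤ K) :
    2*(∑ i ∈ range n, Real.exp (-(i:ℝ)^2/(2*t^2))) - 1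
      ≤ ∑ j ∈ Finset.Icc (-K) (K-1), Real.exp (-(j:ℝ)^2/(2*t^2)) := by
  have hsub : Finset.Icc (-(n:ℤ)) ((n:ℤ)-1) ⊆ Finset.Icc (-K) (K-1) :=
    Finset.Icc_subset_Icc (by omega) (by omega)
  have h1 := Finset.sum_le_sum_of_subset_of_nonneg hsub
    (fun i _ _ => (Real.exp_pos (-(i:ℝ)^2/(2*t^2))).le)
  rw [two_sided t n, Finset.sum_add_distrib] at h1
  have h2 : (∑ i ∈ range n, Real.exp (-(i:ℝ)^2/(2*t^2))) - 1
      ≤ ∑ i ∈ range n, Real.exp (-((i+1:ℕ):ℝ)^2/(2*t^2)) := by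
    have e1 : ∑ i ∈ range (n+1), Real.exp (-(i:ℝ)^2/(2*t^2))
        = (∑ i ∈ range n, Real.exp (-((i+1:ℕ):ℝ)^2/(2*t^2)))
          + Real.exp (-((0:ℕ):ℝ)^2/(2*t^2)) :=
      Finset.sum_range_succ' (fun i => Real.exp (-(i:ℝ)^2/(2*t^2))) n
    have e2 : ∑ i ∈ range (n+1), Real.exp (-(i:ℝ)^2/(2*t^2))
        = (∑ i ∈ range n, Real.exp (-(i:ℝ)^2/(2*t^2)))
          + Real.exp (-((n:ℕ):ℝ)^2/(2*t^2)) := Finset.sum_range_succ _ n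
    have e3 : Real.exp (-((0:ℕ):ℝ)^2/(2*t^2)) = 1 := by norm_num
    have e4 := (Real.exp_pos (-((n:ℕ):ℝ)^2/(2*t^2))).le
    rw [e3] at e1
    linarith
  linarith

set_option maxHeartbeats 1000000 in
/-- core polynomial inequality for the main (large `t`) case. -/
private lemma B2core (x t : ℝ) (hx : 3 ≤ x) (h1 : x ≤ 2*t) (h2 : 2*t ≤ x + 1) :
    6267/5000 * t
      ≤ 2*((x : ℝ) - (x^3/3 - x^2/2 + x/6)/(2*t^2)
          + (x^5/5 - x^4/2 + x^3/3 - x/30)/(8*t^4)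
          - (x^7/7 - x^6/2 + x^5/2 - x^3/6 + x/42)/(48*t^6)) - 1 := by
  have ht0 : (0:ℝ) < t := by linarith
  have hx0 : (0:ℝ) < x := by linarith
  have hx1 : (0:ℝ) < x + 1 := by linarith
  have hy : (0:ℝ) ≤ x - 3 := by linarith
  have hA : (0:ℝ) ≤ x^3/3 - x^2/2 + x/6 := by
    have h2' := pow_nonneg hy 2; have h3' := pow_nonneg hy 3
    nlinarith
  have hB : (0:ℝ) ≤ x^5/5 - x^4/2 + x^3/3 - x/30 := by
    have e : x^5/5 - x^4/2 + x^3/3 - x/30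
        = 17 + (1079/30)*(x-3) + 30*(x-3)^2 + (37/3)*(x-3)^3 + (5/2)*(x-3)^4
          + (1/5)*(x-3)^5 := by ring
    rw [e]
    have h2' := pow_nonneg hy 2; have h3' := pow_nonneg hy 3
    have h4' := pow_nonneg hy 4; have h5' := pow_nonneg hy 5
    linarith
  have hC : (0:ℝ) ≤ x^7/7 - x^6/2 + x^5/2 - x^3/6 + x/42 := by
    have e : x^7/7 - x^6/2 + x^5/2 - x^3/6 + x/42
        = 65 + (8317/42)*(x-3) + 255*(x-3)^2 + (1079/6)*(x-3)^3 + 75*(x-3)^4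
          + (37/2)*(x-3)^5 + (5/2)*(x-3)^6 + (1/7)*(x-3)^7 := by ring
    rw [e]
    have h2' := pow_nonneg hy 2; have h3' := pow_nonneg hy 3
    have h4' := pow_nonneg hy 4; have h5' := pow_nonneg hy 5
    have h6' := pow_nonneg hy 6; have h7' := pow_nonneg hy 7
    linarith
  have ht2 : (0:ℝ) < 2*t^2 := by positivity
  have hx2 : (0:ℝ) < x^2/2 := by positivity
  have hd1 : (x^3/3 - x^2/2 + x/6)/(2*t^2) ≤ (x^3/3 - x^2/2 + x/6)/(x^2/2) := by
    apply div_le_div_of_nonneg_left hA hx2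
    nlinarith
  have ht4 : (0:ℝ) < 8*t^4 := by positivity
  have hd2 : (x^5/5 - x^4/2 + x^3/3 - x/30)/((x+1)^4/2)
      ≤ (x^5/5 - x^4/2 + x^3/3 - x/30)/(8*t^4) := by
    apply div_le_div_of_nonneg_left hB ht4
    nlinarith [pow_le_pow_left₀ (by linarith : (0:ℝ) ≤ 2*t) h2 4]
  have hx6 : (0:ℝ) < 3*x^6/4 := by positivity
  have hd3 : (x^7/7 - x^6/2 + x^5/2 - x^3/6 + x/42)/(48*t^6)
      ≤ (x^7/7 - x^6/2 + x^5/2 - x^3/6 + x/42)/(3*x^6/4) := by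
    apply div_le_div_of_nonneg_left hC hx6
    nlinarith [pow_le_pow_left₀ hx0.le h1 6]
  have hxne : (x:ℝ) ≠ 0 := ne_of_gt hx0
  have hx1ne : (x+1:ℝ) ≠ 0 := ne_of_gt hx1
  have hden : (0:ℝ) < x^6*(x+1)^4 := by positivity
  have hkey : 2*(x - (x^3/3 - x^2/2 + x/6)/(x^2/2)
        + (x^5/5 - x^4/2 + x^3/3 - x/30)/((x+1)^4/2)
        - (x^7/7 - x^6/2 + x^5/2 - x^3/6 + x/42)/(3*x^6/4))
        - (6267/10000*(x+1) + 1)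
      = ((104568044/1875) + (7775019878/39375)*(x-3) + (2500978048/7875)*(x-3)^2
        + (2430948596/7875)*(x-3)^3 + (142078019/700)*(x-3)^4
        + (60073821659/630000)*(x-3)^5 + (1475020667/45000)*(x-3)^6
        + (1039311857/126000)*(x-3)^7 + (2599889/1750)*(x-3)^8
        + (7627483/42000)*(x-3)^9 + (1416467/105000)*(x-3)^10
        + (32131/70000)*(x-3)^11) / (x^6*(x+1)^4) := by
    field_simp
    ring
  have hQ : (0:ℝ) ≤ (104568044/1875) + (7775019878/39375)*(x-3) + (2500978048/7875)*(x-3)^2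
        + (2430948596/7875)*(x-3)^3 + (142078019/700)*(x-3)^4
        + (60073821659/630000)*(x-3)^5 + (1475020667/45000)*(x-3)^6
        + (1039311857/126000)*(x-3)^7 + (2599889/1750)*(x-3)^8
        + (7627483/42000)*(x-3)^9 + (1416467/105000)*(x-3)^10
        + (32131/70000)*(x-3)^11 := by
    have h2' := pow_nonneg hy 2; have h3' := pow_nonneg hy 3
    have h4' := pow_nonneg hy 4; have h5' := pow_nonneg hy 5
    have h6' := pow_nonneg hy 6; have h7' := pow_nonneg hy 7
    have h8' := pow_nonneg hy 8; have h9' := pow_nonneg hy 9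
    have h10' := pow_nonneg hy 10; have h11' := pow_nonneg hy 11
    linarith
  have hfrac : (0:ℝ) ≤ 2*(x - (x^3/3 - x^2/2 + x/6)/(x^2/2)
        + (x^5/5 - x^4/2 + x^3/3 - x/30)/((x+1)^4/2)
        - (x^7/7 - x^6/2 + x^5/2 - x^3/6 + x/42)/(3*x^6/4))
        - (6267/10000*(x+1) + 1) := by
    rw [hkey]
    exact div_nonneg hQ hden.le
  have htx : 6267/5000 * t ≤ 6267/10000*(x+1) := by linarith
  linarith

/-- core polynomial inequality for the moderate case. -/
private lemma A2core (x t : ℝ) (hx : 2 ≤ x) (h1 : x ≤ t) (h2 : t ≤ x + 1) :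
    56403/80000 * t
      ≤ 2*((x : ℝ) - (x^3/3 - x^2/2 + x/6)/(2*t^2)) - 1 := by
  have ht0 : (0:ℝ) < t := by linarith
  have hx0 : (0:ℝ) < x := by linarith
  have hA : (0:ℝ) ≤ x^3/3 - x^2/2 + x/6 := by nlinarith
  have hx2 : (0:ℝ) < 2*x^2 := by positivity
  have hd1 : (x^3/3 - x^2/2 + x/6)/(2*t^2) ≤ (x^3/3 - x^2/2 + x/6)/(2*x^2) := by
    apply div_le_div_of_nonneg_left hA hx2
    nlinarith
  have hd2 : (x^3/3 - x^2/2 + x/6)/(2*x^2) ≤ x/6 := by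
    rw [div_le_iff₀ hx2]
    nlinarith
  have htx : 56403/80000 * t ≤ 56403/80000 * (x+1) := by linarith
  linarith

set_option maxHeartbeats 1000000 in
/-- Fidelity bound between the continuous 1D Gaussian state with standard deviation σ
and its discretization on a lattice with 2^m points and spacing δ. -/
theorem discrete_gaussian_fidelity_bound
    (σ δ ε : ℝ) (m : ℕ) (hσ : 0 < σ) (hm : 0 < m)
    (hε : ε ∈ Set.Ioo (0:ℝ) 1) (hδ0 : 0 < δ) (hδ : δ ≤ min (1/2) σ)
    (hgrid : 2 * σ / Real.sqrt ε ≤ (2:ℝ) ^ m * δ) :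
    1 - ε ≤ (1 / (Real.sqrt (σ * Real.sqrt (2 * Real.pi)) *
        (δ * Real.sqrt (∑ j ∈ Finset.Icc (-(2^(m-1)) : ℤ) (2^(m-1) - 1),
          Real.exp (-(j:ℝ)^2 / (2 * (σ/δ)^2)))))) *
      ∑ j ∈ Finset.Icc (-(2^(m-1)) : ℤ) (2^(m-1) - 1),
        δ * Real.exp (-(j:ℝ)^2 / (2 * (σ/δ)^2)) := by
  obtain ⟨hε0, hε1⟩ := hε
  have hδσ : δ ≤ σ := le_trans hδ (min_le_right _ _)
  have hδhalf : δ ≤ 1/2 := le_trans hδ (min_le_left _ _)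
  set K : ℤ := 2^(m-1) with hKdef
  set t : ℝ := σ/δ with htdef
  set S : ℝ := ∑ j ∈ Finset.Icc (-K) (K-1), Real.exp (-(j:ℝ)^2 / (2 * t^2)) with hSdef
  have hKpos : (0:ℤ) < K := by positivity
  have ht0 : 0 < t := div_pos hσ hδ0
  have ht1 : 1 ≤ t := (one_le_div hδ0).mpr hδσ
  have hσeq : σ = t * δ := by rw [htdef]; field_simp
  have hσle : σ ≤ t/2 := by
    rw [hσeq]
    nlinarith
  have hsε : 0 < Real.sqrt ε := Real.sqrt_pos.mpr hε0
  have hsε1 : Real.sqrt ε < 1 := by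
    have := (Real.sqrt_lt' (by norm_num : (0:ℝ) < 1)).mpr (by nlinarith : ε < 1^2)
    simpa using this
  have hKr : ((K:ℤ):ℝ) = 2^(m-1) := by rw [hKdef]; push_cast; ring
  have hKr0 : (0:ℝ) < (K:ℝ) := by rw [hKr]; positivity
  have h2m : (2:ℝ)^m = 2 * 2^(m-1) := by
    conv_lhs => rw [show m = (m-1)+1 by omega]
    rw [pow_succ]
    ring
  have hgrid2 : 2*σ ≤ 2^m * δ * Real.sqrt ε := by
    have := (div_le_iff₀ hsε).mp hgrid
    linarith
  have hgrid' : t ≤ (K:ℝ) * Real.sqrt ε := by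
    rw [htdef, div_le_iff₀ hδ0, hKr]
    rw [h2m] at hgrid2
    nlinarith
  have htK : t ≤ (K:ℝ) := by
    calc t ≤ (K:ℝ) * Real.sqrt ε := hgrid'
      _ ≤ (K:ℝ) * 1 := by nlinarith
      _ = (K:ℝ) := mul_one _
  have hK2 : (2:ℝ) ≤ (K:ℝ) := by
    by_contra hcon
    push_neg at hcon
    have hKlt : K < 2 := by exact_mod_cast hcon
    have hKeq : K = 1 := by omega
    have : (K:ℝ) = 1 := by rw [hKeq]; norm_num
    rw [this, one_mul] at hgrid'
    linarith
  have hS0 : 0 < S := by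
    rw [hSdef]
    apply Finset.sum_pos (fun j _ => Real.exp_pos _)
    exact Finset.nonempty_Icc.mpr (by omega)
  have h2π : (0:ℝ) < 2 * Real.pi := by positivity
  have hNarg : (0:ℝ) < σ * Real.sqrt (2 * Real.pi) :=
    mul_pos hσ (Real.sqrt_pos.mpr h2π)
  have hNpos : 0 < Real.sqrt (σ * Real.sqrt (2 * Real.pi)) := Real.sqrt_pos.mpr hNarg
  have hrw : ∑ j ∈ Finset.Icc (-K) (K-1), δ * Real.exp (-(j:ℝ)^2 / (2 * t^2))
      = δ * S := by rw [hSdef, Finset.mul_sum]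
  rw [hrw]
  have hexpand : 1 / (Real.sqrt (σ * Real.sqrt (2 * Real.pi)) * (δ * Real.sqrt S)) * (δ * S)
      = Real.sqrt S / Real.sqrt (σ * Real.sqrt (2 * Real.pi)) := by
    obtain ⟨u, hu⟩ : ∃ u, Real.sqrt S = u := ⟨_, rfl⟩
    have hu0 : 0 < u := hu ▸ Real.sqrt_pos.mpr hS0
    have hSS : u * u = S := hu ▸ Real.mul_self_sqrt hS0.le
    rw [hu, ← hSS]
    field_simp
  rw [hexpand, le_div_iff₀ hNpos]
  apply Real.le_sqrt_of_sq_le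
  have hsq : ((1-ε) * Real.sqrt (σ * Real.sqrt (2 * Real.pi)))^2
      = (1-ε)^2 * (σ * Real.sqrt (2 * Real.pi)) := by
    rw [mul_pow, Real.sq_sqrt hNarg.le]
  rw [hsq]
  -- main bound: (1-ε)^2 * (σ √(2π)) ≤ S
  have hsqrt2pi : Real.sqrt (2 * Real.pi) ≤ 6267/2500 := by
    rw [show (6267/2500:ℝ) = Real.sqrt ((6267/2500)^2) by
      rw [Real.sqrt_sq (by norm_num)]]
    apply Real.sqrt_le_sqrt
    nlinarith [Real.pi_lt_d6]
  have hσ2π : σ * Real.sqrt (2 * Real.pi) ≤ 6267/5000 * t := by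
    have h1 : σ * Real.sqrt (2 * Real.pi) ≤ (t/2) * (6267/2500) := by
      apply mul_le_mul hσle hsqrt2pi (Real.sqrt_nonneg _) (by linarith)
    linarith
  have hε2 : (1-ε)^2 ≤ 1 := by nlinarith
  have hσ2π0 : (0:ℝ) ≤ σ * Real.sqrt (2 * Real.pi) := hNarg.le
  rcases lt_or_ge ε (1/4) with hlt | hge
  · -- case B : ε < 1/4, so K ≥ 2t
    have hsε2 : Real.sqrt ε < 1/2 :=
      (Real.sqrt_lt' (by norm_num : (0:ℝ) < 1/2)).mpr (by nlinarith)
    have h2t : 2*t ≤ (K:ℝ) := by nlinarith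
    have hmul : (1-ε)^2 * (σ * Real.sqrt (2 * Real.pi)) ≤ 1 * (6267/5000 * t) :=
      mul_le_mul hε2 hσ2π hσ2π0 (by norm_num)
    rcases lt_or_ge t (3/2) with hts | htl
    · -- B1 : t < 3/2, use n = 2
      have hn2 : ((2:ℕ):ℤ) ≤ K := by exact_mod_cast hK2
      have hlow := sum_lower t K 2 hn2
      have hsum2 : ∑ i ∈ range 2, Real.exp (-(i:ℝ)^2/(2*t^2))
          = 1 + Real.exp (-1/(2*t^2)) := by
        norm_num [Finset.sum_range_succ]
      have harg : -(1/2:ℝ) ≤ -1/(2*t^2) := by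
        rw [neg_div]
        have h1 : 1/(2*t^2) ≤ 1/2 := by
          rw [div_le_div_iff₀ (by positivity) (by norm_num)]
          nlinarith
        linarith
      have hmono := Real.exp_le_exp.mpr harg
      have hc := exp_cubic (s := (1/2:ℝ)) (by norm_num)
      have hc' : (29:ℝ)/48 ≤ Real.exp (-(1/2:ℝ)) := le_trans (by norm_num) hc
      have hexpval : (29:ℝ)/48 ≤ Real.exp (-1/(2*t^2)) := le_trans hc' hmono
      rw [hsum2] at hlow
      rw [← hSdef] at hlow
      linarith [hmul, hlow, hexpval]
    · -- B2 : t ≥ 3/2, use n = ⌊2t⌋₊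
      set n : ℕ := ⌊2*t⌋₊ with hn
      have hx3 : (3:ℝ) ≤ (n:ℝ) := by
        have : (3:ℕ) ≤ n := Nat.le_floor (by push_cast; linarith)
        exact_mod_cast this
      have hxle : (n:ℝ) ≤ 2*t := Nat.floor_le (by linarith)
      have hgtx : 2*t < (n:ℝ) + 1 := Nat.lt_floor_add_one _
      have hnK : ((n:ℕ):ℤ) ≤ K := by
        have : (n:ℝ) ≤ (K:ℝ) := le_trans hxle h2t
        exact_mod_cast this
      have hlow := sum_lower t K n hnK
      have hterm : ∀ i ∈ range n,
          (1 - (i:ℝ)^2/(2*t^2) + ((i:ℝ)^2/(2*t^2))^2/2 - ((i:ℝ)^2/(2*t^2))^3/6)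
            ≤ Real.exp (-(i:ℝ)^2/(2*t^2)) := by
        intro i _
        have h0 : (0:ℝ) ≤ (i:ℝ)^2/(2*t^2) := by positivity
        have := exp_cubic h0
        rwa [← neg_div] at this
      have hsumle := Finset.sum_le_sum hterm
      rw [sumP3 t n] at hsumle
      have hcore := B2core (n:ℝ) t hx3 hxle (le_of_lt hgtx)
      rw [← hSdef] at hlow
      linarith
  · -- case A : ε ≥ 1/4
    have h916 : (1-ε)^2 ≤ 9/16 := by nlinarith
    have hmul : (1-ε)^2 * (σ * Real.sqrt (2 * Real.pi)) ≤ 9/16 * (6267/5000 * t) :=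
      mul_le_mul h916 hσ2π hσ2π0 (by norm_num)
    have hconst : (9:ℝ)/16 * (6267/5000 * t) = 56403/80000 * t := by ring
    rcases lt_or_ge t 2 with hts | htl
    · -- A1 : t < 2, use n = 2
      have hn2 : ((2:ℕ):ℤ) ≤ K := by exact_mod_cast hK2
      have hlow := sum_lower t K 2 hn2
      have hsum2 : ∑ i ∈ range 2, Real.exp (-(i:ℝ)^2/(2*t^2))
          = 1 + Real.exp (-1/(2*t^2)) := by
        norm_num [Finset.sum_range_succ]
      have harg : -(1/2:ℝ) ≤ -1/(2*t^2) := by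
        rw [neg_div]
        have h1 : 1/(2*t^2) ≤ 1/2 := by
          rw [div_le_div_iff₀ (by positivity) (by norm_num)]
          nlinarith
        linarith
      have hmono := Real.exp_le_exp.mpr harg
      have hc := exp_cubic (s := (1/2:ℝ)) (by norm_num)
      have hc' : (29:ℝ)/48 ≤ Real.exp (-(1/2:ℝ)) := le_trans (by norm_num) hc
      have hexpval : (29:ℝ)/48 ≤ Real.exp (-1/(2*t^2)) := le_trans hc' hmono
      rw [hsum2] at hlow
      rw [← hSdef] at hlow
      linarith [hmul, hlow, hexpval]
    · -- A2 : t ≥ 2, use n = ⌊t⌋₊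
      set n : ℕ := ⌊t⌋₊ with hn
      have hx2 : (2:ℝ) ≤ (n:ℝ) := by
        have : (2:ℕ) ≤ n := Nat.le_floor (by push_cast; linarith)
        exact_mod_cast this
      have hxle : (n:ℝ) ≤ t := Nat.floor_le (by linarith)
      have hgtx : t < (n:ℝ) + 1 := Nat.lt_floor_add_one _
      have hnK : ((n:ℕ):ℤ) ≤ K := by
        have : (n:ℝ) ≤ (K:ℝ) := le_trans hxle htK
        exact_mod_cast this
      have hlow := sum_lower t K n hnK
      have hterm : ∀ i ∈ range n,
          (1 - (i:ℝ)^2/(2*t^2)) ≤ Real.exp (-(i:ℝ)^2/(2*t^2)) := by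
        intro i _
        have := Real.one_sub_le_exp_neg ((i:ℝ)^2/(2*t^2))
        rwa [← neg_div] at this
      have hsumle := Finset.sum_le_sum hterm
      rw [sumP1 t n] at hsumle
      have hcore := A2core (n:ℝ) t hx2 hxle (le_of_lt hgtx)
      rw [← hSdef] at hlow
      linarith
end

section
/- Let J be an even positive integer, let σ > 0, and let 0 < δ ≤ min(1/2, σ). Set r := δ/(σ√2), 𝒩 := (σ√(2π))^{1/2} and Ñ := δ · ( Σ_{j=−J/2}^{J/2−1} exp(−j²r²) )^{1/2}. Then (1/(𝒩·Ñ)) · Σ_{j=−J/2}^{J/2−1} δ · exp(−j²r²) ≥ (1/𝒩²) · ∫_{−Jδ/2}^{Jδ/2} exp(−x²/(2σ²)) dx. -/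
open Real MeasureTheory

private lemma sum_Icc_int_eq (m : ℤ) (n : ℕ) (f : ℤ → ℝ) :
    ∑ j ∈ Finset.Icc m (m + n - 1), f j = ∑ i ∈ Finset.range n, f (m + i) := by
  induction n with
  | zero => simp
  | succ n ih =>
    rw [Finset.sum_range_succ, ← ih]
    have h1 : (m + ((n+1 : ℕ) : ℤ) - 1) = (m + n - 1) + 1 := by push_cast; ring
    have h2 : m + (n:ℤ) - 1 + 1 = m + n := by ring
    have hins : Finset.Icc m (m + (n:ℤ) - 1 + 1)
        = insert (m + (n:ℤ)) (Finset.Icc m (m + (n:ℤ) - 1)) := by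
      ext x
      simp only [Finset.mem_Icc, Finset.mem_insert]
      omega
    rw [h1, hins, Finset.sum_insert (by simp [Finset.mem_Icc])]
    ring

private lemma sum_range_add' (φ : ℕ → ℝ) (m n : ℕ) :
    ∑ i ∈ Finset.range (m + n), φ i
      = ∑ i ∈ Finset.range m, φ i + ∑ i ∈ Finset.range n, φ (m + i) := by
  induction n with
  | zero => simp
  | succ n ih =>
    rw [Nat.add_succ, Finset.sum_range_succ, ih, Finset.sum_range_succ, add_assoc]

/-- The normalized discrete Gaussian sum dominates the corresponding
normalized Gaussian integral. -/
theorem discrete_gaussian_sum_ge_integral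
    (J : ℕ) (hJ : 0 < J) (hJe : Even J) (σ δ : ℝ)
    (hσ : 0 < σ) (hδ0 : 0 < δ) (hδ : δ ≤ min (1/2) σ) :
    (1 / (Real.sqrt (σ * Real.sqrt (2 * Real.pi)) *
        (δ * Real.sqrt (∑ j ∈ Finset.Icc (-(J:ℤ)/2) ((J:ℤ)/2 - 1),
          Real.exp (-(j:ℝ)^2 * (δ / (σ * Real.sqrt 2))^2))))) *
      (∑ j ∈ Finset.Icc (-(J:ℤ)/2) ((J:ℤ)/2 - 1),
        δ * Real.exp (-(j:ℝ)^2 * (δ / (σ * Real.sqrt 2))^2))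
    ≥ (1 / Real.sqrt (σ * Real.sqrt (2 * Real.pi)) ^ 2) *
      ∫ x in (-(J:ℝ) * δ / 2)..((J:ℝ) * δ / 2), Real.exp (-x^2 / (2 * σ^2)) := by
  obtain ⟨K, hK⟩ := hJe
  have hK1 : 1 ≤ K := by omega
  have hδhalf : δ ≤ 1/2 := le_trans hδ (min_le_left _ _)
  set r2 : ℝ := (δ / (σ * Real.sqrt 2))^2 with hr2
  have hr2nn : 0 ≤ r2 := sq_nonneg _
  set f : ℤ → ℝ := fun j => Real.exp (-(j:ℝ)^2 * r2) with hf
  set g : ℝ → ℝ := fun u => Real.exp (-u^2 * r2) with hg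
  have hfg : ∀ j : ℤ, f j = g (j : ℝ) := fun j => rfl
  have hJZ : (J : ℤ) = 2 * K := by rw [hK]; push_cast; ring
  have hb1 : -(J:ℤ)/2 = -(K:ℤ) := by omega
  have hb2 : (J:ℤ)/2 - 1 = (K:ℤ) - 1 := by omega
  set S : ℝ := ∑ j ∈ Finset.Icc (-(J:ℤ)/2) ((J:ℤ)/2 - 1), f j with hS
  -- S ≥ 1
  have hS1 : 1 ≤ S := by
    have h0mem : (0 : ℤ) ∈ Finset.Icc (-(J:ℤ)/2) ((J:ℤ)/2 - 1) := by
      rw [Finset.mem_Icc]; omega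
    have h := Finset.single_le_sum (f := f)
      (fun i _ => le_of_lt (Real.exp_pos _)) h0mem
    have h0 : f 0 = 1 := by simp [hf]
    rw [hS]
    linarith
  have hSpos : 0 < S := lt_of_lt_of_le one_pos hS1
  -- rewrite S as a range sum
  have hSrange : S = ∑ i ∈ Finset.range (2*K), f (-(K:ℤ) + i) := by
    have he : -(K:ℤ) + ((2*K : ℕ) : ℤ) - 1 = (K:ℤ) - 1 := by push_cast; ring
    have h := sum_Icc_int_eq (-(K:ℤ)) (2*K) f
    rw [he] at h
    rw [hS, hb1, hb2, h]
  -- continuity of g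
  have hgcont : Continuous g := by
    apply Real.continuous_exp.comp
    exact (continuous_pow 2).neg.mul continuous_const
  -- antitone on [0, K]
  have hant : AntitoneOn g (Set.Icc (0:ℝ) (0 + (K:ℕ))) := by
    intro x hx y hy hxy
    apply Real.exp_le_exp.mpr
    have : x^2 ≤ y^2 := pow_le_pow_left₀ hx.1 hxy 2
    nlinarith
  -- monotone on [-K, 0]
  have hmon : MonotoneOn g (Set.Icc (-(K:ℝ)) (-(K:ℝ) + (K:ℕ))) := by
    intro x hx y hy hxy
    apply Real.exp_le_exp.mpr
    have hy0 : y ≤ 0 := by simpa using hy.2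
    have : y^2 ≤ x^2 := by nlinarith
    nlinarith
  -- the integral
  set I : ℝ := ∫ x in (-(J:ℝ) * δ / 2)..((J:ℝ) * δ / 2), Real.exp (-x^2 / (2 * σ^2)) with hI
  have hJR : (J : ℝ) = 2 * K := by rw [hK]; push_cast; ring
  have hFg : ∀ u : ℝ, Real.exp (-(δ*u)^2 / (2 * σ^2)) = g u := by
    intro u
    have h2 : Real.sqrt 2 ^ 2 = 2 := Real.sq_sqrt (by norm_num)
    have h3 : (σ * Real.sqrt 2)^2 = 2 * σ^2 := by rw [mul_pow, h2]; ring
    have heq : -(δ*u)^2 / (2 * σ^2) = -u^2 * r2 := by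
      rw [hr2, div_pow, h3]
      field_simp
    rw [hg, heq]
  -- substitution x = δ u
  have hsub : I = δ * ∫ u in (-(K:ℝ))..(K:ℝ), g u := by
    have hbnd : I = ∫ x in (δ * (-(K:ℝ)))..(δ * (K:ℝ)), Real.exp (-x^2 / (2 * σ^2)) := by
      rw [hI]
      congr 1 <;> (rw [hJR]; ring)
    have h2 := intervalIntegral.integral_comp_mul_left (a := (-(K:ℝ))) (b := (K:ℝ))
      (c := δ) (fun x => Real.exp (-x^2 / (2 * σ^2))) (ne_of_gt hδ0)
    rw [smul_eq_mul] at h2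
    have h3 : (∫ u in (-(K:ℝ))..(K:ℝ), g u)
        = δ⁻¹ * ∫ x in (δ * (-(K:ℝ)))..(δ * (K:ℝ)), Real.exp (-x^2 / (2 * σ^2)) := by
      rw [← h2]
      apply intervalIntegral.integral_congr
      intro u _
      simpa using (hFg u).symm
    rw [hbnd, h3, ← mul_assoc, mul_inv_cancel₀ (ne_of_gt hδ0), one_mul]
  -- split and bound the u-integral
  have hsplit : (∫ u in (-(K:ℝ))..(K:ℝ), g u)
      = (∫ u in (-(K:ℝ))..(0:ℝ), g u) + ∫ u in (0:ℝ)..(K:ℝ), g u := by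
    rw [intervalIntegral.integral_add_adjacent_intervals
      (hgcont.intervalIntegrable _ _) (hgcont.intervalIntegrable _ _)]
  have hpos_half : (∫ u in (0:ℝ)..(K:ℝ), g u) ≤ ∑ i ∈ Finset.range K, g i := by
    have := hant.integral_le_sum
    simpa using this
  have hneg_half : (∫ u in (-(K:ℝ))..(0:ℝ), g u)
      ≤ ∑ i ∈ Finset.range K, g (-(K:ℝ) + (i + 1 : ℕ)) := by
    have := hmon.integral_le_sum
    have hz : -(K:ℝ) + (K:ℕ) = 0 := by simp
    rw [hz] at this
    exact this
  -- relate the two range-sums to S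
  have hsum_eq : ∑ i ∈ Finset.range (2*K), f (-(K:ℤ) + i)
      = ∑ i ∈ Finset.range K, f (-(K:ℤ) + i) + ∑ i ∈ Finset.range K, f i := by
    rw [two_mul, sum_range_add' (fun i => f (-(K:ℤ) + i)) K K]
    congr 1
    apply Finset.sum_congr rfl
    intro i _
    congr 1
    push_cast; ring
  have hpos_eq : ∑ i ∈ Finset.range K, g i = ∑ i ∈ Finset.range K, f i := by
    apply Finset.sum_congr rfl
    intro i _
    rw [hfg]
    norm_num
  have hneg_le : ∑ i ∈ Finset.range K, g (-(K:ℝ) + (i + 1 : ℕ))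
      ≤ ∑ i ∈ Finset.range K, f (-(K:ℤ) + i) + 1 := by
    have heq : ∀ i : ℕ, g (-(K:ℝ) + (i + 1 : ℕ)) = f (-(K:ℤ) + (i+1)) := by
      intro i
      rw [hfg]
      congr 1
      push_cast; ring
    calc ∑ i ∈ Finset.range K, g (-(K:ℝ) + (i + 1 : ℕ))
        = ∑ i ∈ Finset.range K, f (-(K:ℤ) + (i+1)) := by
          exact Finset.sum_congr rfl fun i _ => heq i
      _ = ∑ i ∈ Finset.range (K+1), f (-(K:ℤ) + i) - f (-(K:ℤ) + 0) := by
          rw [Finset.sum_range_succ' (fun i => f (-(K:ℤ) + i)) K]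
          push_cast
          ring
      _ = ∑ i ∈ Finset.range K, f (-(K:ℤ) + i) + f (-(K:ℤ) + K) - f (-(K:ℤ)) := by
          rw [Finset.sum_range_succ]; norm_num
      _ ≤ ∑ i ∈ Finset.range K, f (-(K:ℤ) + i) + 1 := by
          have h1 : f (-(K:ℤ) + K) = 1 := by simp [hf]
          have h2 : 0 ≤ f (-(K:ℤ)) := le_of_lt (Real.exp_pos _)
          linarith
  -- I ≤ δ (S + 1) ≤ S
  have hIS : I ≤ S := by
    have hIb : I ≤ δ * (S + 1) := by
      rw [hsub, hsplit]
      have : (∫ u in (-(K:ℝ))..(0:ℝ), g u) + (∫ u in (0:ℝ)..(K:ℝ), g u) ≤ S + 1 := by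
        rw [hSrange, hsum_eq]
        calc (∫ u in (-(K:ℝ))..(0:ℝ), g u) + (∫ u in (0:ℝ)..(K:ℝ), g u)
            ≤ (∑ i ∈ Finset.range K, f (-(K:ℤ) + i) + 1)
              + ∑ i ∈ Finset.range K, f i := by
              have := hpos_half
              rw [hpos_eq] at this
              exact add_le_add (le_trans hneg_half hneg_le) this
          _ = ∑ i ∈ Finset.range K, f (-(K:ℤ) + i) + ∑ i ∈ Finset.range K, f i + 1 := by ring
      exact mul_le_mul_of_nonneg_left this (le_of_lt hδ0)
    nlinarith
  -- I ≥ 0 and I ≤ σ√(2π)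
  have hab : -(J:ℝ) * δ / 2 ≤ (J:ℝ) * δ / 2 := by
    have : (0:ℝ) ≤ (J:ℝ) * δ := mul_nonneg (Nat.cast_nonneg J) (le_of_lt hδ0)
    linarith
  have hInt : Integrable (fun x : ℝ => Real.exp (-x^2 / (2 * σ^2))) := by
    have : (fun x : ℝ => Real.exp (-x^2 / (2 * σ^2)))
        = fun x : ℝ => Real.exp (-(1/(2*σ^2)) * x^2) := by
      funext x; congr 1; field_simp
    rw [this]
    exact integrable_exp_neg_mul_sq (by positivity)
  have hI0 : 0 ≤ I := by
    rw [hI]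
    apply intervalIntegral.integral_nonneg hab
    intro x _
    exact le_of_lt (Real.exp_pos _)
  have hgauss : (∫ x : ℝ, Real.exp (-x^2 / (2 * σ^2))) = σ * Real.sqrt (2 * Real.pi) := by
    have h1 : (fun x : ℝ => Real.exp (-x^2 / (2 * σ^2)))
        = fun x : ℝ => Real.exp (-(1/(2*σ^2)) * x^2) := by
      funext x; congr 1; field_simp
    rw [h1, integral_gaussian]
    have h2 : Real.pi / (1/(2*σ^2)) = (2 * Real.pi) * σ^2 := by field_simp
    rw [h2, Real.sqrt_mul (by positivity), Real.sqrt_sq (le_of_lt hσ)]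
    ring
  have hIN : I ≤ σ * Real.sqrt (2 * Real.pi) := by
    rw [← hgauss, hI, intervalIntegral.integral_of_le hab]
    exact setIntegral_le_integral hInt (Filter.Eventually.of_forall fun x => le_of_lt (Real.exp_pos _))
  -- main inequality
  set N2 : ℝ := σ * Real.sqrt (2 * Real.pi) with hN2def
  have hN2pos : 0 < N2 := by
    apply mul_pos hσ
    apply Real.sqrt_pos.mpr
    positivity
  set N : ℝ := Real.sqrt N2 with hNdef
  have hNpos : 0 < N := Real.sqrt_pos.mpr hN2pos
  have hNsq : N^2 = N2 := Real.sq_sqrt (le_of_lt hN2pos)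
  set sS : ℝ := Real.sqrt S with hsSdef
  have hsSpos : 0 < sS := Real.sqrt_pos.mpr hSpos
  have hsSsq : sS^2 = S := Real.sq_sqrt (le_of_lt hSpos)
  have hIsq : I^2 ≤ N2 * S := by
    rw [pow_two]
    exact mul_le_mul hIN hIS hI0 (le_of_lt hN2pos)
  have hkey : I ≤ N * sS := by
    have h1 : I = Real.sqrt (I^2) := (Real.sqrt_sq hI0).symm
    rw [h1, hNdef, hsSdef, ← Real.sqrt_mul (le_of_lt hN2pos)]
    exact Real.sqrt_le_sqrt hIsq
  -- finish
  rw [ge_iff_le, ← Finset.mul_sum]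
  have hL : 1 / (N * (δ * sS)) * (δ * S) = sS / N := by
    rw [← hsSsq]
    field_simp
  calc 1 / N^2 * I ≤ 1 / N^2 * (N * sS) :=
        mul_le_mul_of_nonneg_left hkey (by positivity)
    _ = sS / N := by rw [pow_two]; field_simp
    _ = 1 / (N * (δ * sS)) * (δ * S) := hL.symm
end

section
/- Let J be an even positive integer, let σ > 0, and let 0 < δ ≤ min(1/2, σ). Set r := δ/(σ√2) and p := 1 + e^{π−2π²}·(π^{1/4}/Γ(3/4) − 1), where Γ is the Gamma function. Then √(δ/p) · Σ_{j=−J/2}^{J/2−1} exp(−j²r²) ≥ ∫_{−Jδ/2}^{Jδ/2} exp(−x²/(2σ²)) dx. -/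
/-!
Write `J = 2m`, `r = δ/(σ√2)` and `T = ∑_{k<m} e^{-k²r²}`. Substituting `x = δt`, the integral is
`δ ∫_{-m}^{m} e^{-r²t²} dt`, which is at most `2δT` because `T` is a left Riemann sum of the
decreasing function `t ↦ e^{-r²t²}` on `[0, m]`. Folding the discrete sum at `0` writes it as
`T + T'` with `T' = ∑_{k<m} e^{-(k+1)²r²}`, and `r² ≤ 1/2` forces `T' ≥ (21/50) T`. Since
`(71/50)² > 2` and `δ ≤ 1/2`, the inequality `2δ ≤ (71/50) √(δ/p)` only needs `p ≤ 1.0082`,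
whereas `1 ≤ Γ(3/4)` (convexity of `Γ`) gives `|p - 1| ≤ 3 e^{π - 2π²}`.
-/

open Real Finset

theorem Finset.sum_Ico_neg_eq_sum_range {M : Type*} [AddCommMonoid M] (f : ℤ → M) (m : ℕ) :
    ∑ j ∈ Ico (-(m : ℤ)) m, f j = ∑ k ∈ range m, (f k + f (-(k + 1))) := by
  induction m with
  | zero => simp
  | succ m ih =>
    have hIco : Ico (-((m + 1 : ℕ) : ℤ)) ((m + 1 : ℕ) : ℤ)
        = insert (-((m : ℤ) + 1)) (insert (m : ℤ) (Ico (-(m : ℤ)) m)) := by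
      ext j; simp; omega
    rw [hIco, sum_insert (by simp), sum_insert (by simp), ih, sum_range_succ]
    abel

theorem intervalIntegral.integral_neg_self_eq_two_smul_of_even {E : Type*}
    [NormedAddCommGroup E] [NormedSpace ℝ E] {f : ℝ → E} (heven : ∀ x, f (-x) = f x) {a : ℝ}
    (hf : IntervalIntegrable f MeasureTheory.volume 0 a) :
    ∫ x in -a..a, f x = (2 : ℝ) • ∫ x in 0..a, f x := by
  have hreflect : ∫ x in -a..0, f x = ∫ x in 0..a, f x := by
    simpa [heven] using (integral_comp_neg (a := 0) (b := a) f).symm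
  have hf' : IntervalIntegrable f MeasureTheory.volume (-a) 0 := by
    simpa [heven] using ((IntervalIntegrable.iff_comp_neg).mp hf).symm
  rw [← integral_add_adjacent_intervals hf' hf, hreflect, two_smul]

theorem Real.one_le_Gamma_three_div_four : 1 ≤ Gamma (3 / 4) := by
  have hconv := convexOn_Gamma.2
  have h54 : Gamma (5 / 4) ≤ 1 := by
    have := hconv (by norm_num : (1 : ℝ) ∈ Set.Ioi 0) (by norm_num : (2 : ℝ) ∈ Set.Ioi 0)
      (by norm_num : (0 : ℝ) ≤ 3 / 4) (by norm_num : (0 : ℝ) ≤ 1 / 4) (by norm_num)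
    norm_num [Gamma_two] at this
    exact this
  have := hconv (by norm_num : (3 / 4 : ℝ) ∈ Set.Ioi 0) (by norm_num : (5 / 4 : ℝ) ∈ Set.Ioi 0)
    (by norm_num : (0 : ℝ) ≤ 1 / 2) (by norm_num : (0 : ℝ) ≤ 1 / 2) (by norm_num)
  norm_num at this
  linarith

theorem Real.three_div_five_lt_exp_neg_half : 3 / 5 < exp (-(1 / 2)) := by
  have hsq : exp (-(1 / 2)) ^ 2 = exp (-1) := by rw [← exp_nat_mul]; norm_num
  exact lt_of_pow_lt_pow_left₀ 2 (exp_pos _).le (by rw [hsq]; linarith [exp_neg_one_gt_d9])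

/-- The bound holds because the left sum is at most `1 +` the right sum, and for `m ≥ 2` the
right sum is at least `e^{-c} + e^{-4c} > 3/5 + (3/5)⁴ > 21/29`. -/
theorem mul_sum_range_exp_neg_sq_le_sum_exp_neg_succ_sq {c : ℝ} (hc : c ≤ 1 / 2) {m : ℕ}
    (hm : m ≠ 0) :
    21 / 50 * ∑ k ∈ range m, exp (-(k : ℝ) ^ 2 * c)
      ≤ ∑ k ∈ range m, exp (-((k : ℝ) + 1) ^ 2 * c) := by
  have hu : 3 / 5 < exp (-c) :=
    three_div_five_lt_exp_neg_half.trans_le (exp_le_exp.2 (by linarith))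
  obtain ⟨n, rfl⟩ := Nat.exists_eq_succ_of_ne_zero hm
  have hshift : ∑ k ∈ range (n + 1), exp (-(k : ℝ) ^ 2 * c)
      ≤ 1 + ∑ k ∈ range (n + 1), exp (-((k : ℝ) + 1) ^ 2 * c) := by
    rw [sum_range_succ', sum_range_succ]
    norm_num
    linarith [exp_pos (-(((n : ℝ) + 1) ^ 2 * c))]
  rcases n with _ | n
  · norm_num
    linarith
  · have htwo : ∑ k ∈ range 2, exp (-((k : ℝ) + 1) ^ 2 * c) = exp (-c) + exp (-c) ^ 4 := by
      rw [← exp_nat_mul]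
      norm_num [sum_range_succ]
    have hsub := sum_le_sum_of_subset_of_nonneg (range_subset_range.2 (by omega : 2 ≤ n + 2))
      (fun k _ _ => (exp_pos (-((k : ℝ) + 1) ^ 2 * c)).le)
    nlinarith [pow_le_pow_left₀ (by norm_num) hu.le 4]

theorem integral_exp_neg_sq_mul_le_two_mul_sum {c : ℝ} (hc : 0 ≤ c) (m : ℕ) :
    ∫ t in -(m : ℝ)..m, exp (-t ^ 2 * c) ≤ 2 * ∑ k ∈ range m, exp (-(k : ℝ) ^ 2 * c) := by
  have hanti : AntitoneOn (fun t : ℝ => exp (-t ^ 2 * c)) (Set.Icc 0 (0 + m)) := by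
    intro x hx y _ hxy
    simp only [exp_le_exp, neg_mul, neg_le_neg_iff]
    gcongr
    exact hx.1
  rw [intervalIntegral.integral_neg_self_eq_two_smul_of_even (by simp)
    ((by fun_prop : Continuous fun t : ℝ => exp (-t ^ 2 * c)).intervalIntegrable _ _),
    smul_eq_mul]
  gcongr
  simpa using hanti.integral_le_sum

theorem integral_exp_neg_sq_div_eq_mul_integral {σ : ℝ} (hσ : σ ≠ 0) (a δ : ℝ) :
    ∫ x in -(a * δ)..a * δ, exp (-x ^ 2 / (2 * σ ^ 2))
      = δ * ∫ t in -a..a, exp (-t ^ 2 * (δ / (σ * √2)) ^ 2) := by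
  have hsubst : ∀ t, exp (-(t * δ) ^ 2 / (2 * σ ^ 2)) = exp (-t ^ 2 * (δ / (σ * √2)) ^ 2) := by
    intro t
    rw [div_pow, mul_pow σ, sq_sqrt zero_le_two]
    congr 1
    field_simp
  rw [← neg_mul, ← intervalIntegral.smul_integral_comp_mul_right, smul_eq_mul]
  simp only [hsubst]

theorem one_add_exp_mul_rpow_div_Gamma_sub_one_mem_Ioc :
    1 + exp (π - 2 * π ^ 2) * (π ^ ((1 : ℝ) / 4) / Gamma (3 / 4) - 1) ∈ Set.Ioc 0 (5041 / 5000) := by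
  have hexp : exp (π - 2 * π ^ 2) ≤ 1 / 625 := by
    have h5 : 5 ≤ exp 4 := by linarith [add_one_le_exp (4 : ℝ)]
    calc exp (π - 2 * π ^ 2) ≤ exp (4 * -4) := exp_le_exp.2 (by nlinarith [pi_gt_d2])
      _ = (exp 4)⁻¹ ^ 4 := by rw [← exp_neg, ← exp_nat_mul]; norm_num
      _ ≤ (1 / 5) ^ 4 := by gcongr; exact inv_le_of_inv_le₀ (by norm_num) (by simpa using h5)
      _ = 1 / 625 := by norm_num
  have hratio : π ^ ((1 : ℝ) / 4) / Gamma (3 / 4) ≤ 4 :=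
    calc π ^ ((1 : ℝ) / 4) / Gamma (3 / 4) ≤ π ^ ((1 : ℝ) / 4) :=
          div_le_self (by positivity) one_le_Gamma_three_div_four
      _ ≤ π ^ (1 : ℝ) := rpow_le_rpow_of_exponent_le (by linarith [pi_gt_three]) (by norm_num)
      _ ≤ 4 := by rw [rpow_one]; exact pi_lt_four.le
  have hratio0 : 0 ≤ π ^ ((1 : ℝ) / 4) / Gamma (3 / 4) := by positivity
  constructor <;> nlinarith [exp_pos (π - 2 * π ^ 2)]

/-- √(δ/p) times the discrete Gaussian sum dominates the Gaussian integral,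
where p := 1 + e^{π−2π²}·(π^{1/4}/Γ(3/4) − 1). -/
theorem scaled_gaussian_sum_ge_integral
    (J : ℕ) (hJ : 0 < J) (hJe : Even J) (σ δ : ℝ)
    (hσ : 0 < σ) (hδ0 : 0 < δ) (hδ : δ ≤ min (1/2) σ) :
    Real.sqrt (δ / (1 + Real.exp (Real.pi - 2 * Real.pi^2) *
        (Real.pi ^ ((1:ℝ)/4) / Real.Gamma (3/4) - 1))) *
      (∑ j ∈ Finset.Icc (-(J:ℤ)/2) ((J:ℤ)/2 - 1),
        Real.exp (-(j:ℝ)^2 * (δ / (σ * Real.sqrt 2))^2))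
    ≥ ∫ x in (-(J:ℝ) * δ / 2)..((J:ℝ) * δ / 2), Real.exp (-x^2 / (2 * σ^2)) := by
  obtain ⟨m, rfl⟩ := hJe
  obtain ⟨hp0, hp⟩ := one_add_exp_mul_rpow_div_Gamma_sub_one_mem_Ioc
  set p := 1 + exp (π - 2 * π ^ 2) * (π ^ ((1 : ℝ) / 4) / Gamma (3 / 4) - 1)
  set r := δ / (σ * √2)
  have hr : r ^ 2 ≤ 1 / 2 := by
    rw [div_pow, mul_pow, sq_sqrt zero_le_two, div_le_iff₀ (by positivity)]
    nlinarith [le_min_iff.1 hδ]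
  have hδp : 2 * δ ≤ 71 / 50 * √(δ / p) := by
    rw [← div_le_iff₀' (by norm_num), le_sqrt' (by positivity), le_div_iff₀ hp0]
    nlinarith [le_min_iff.1 hδ]
  have hsum := mul_sum_range_exp_neg_sq_le_sum_exp_neg_succ_sq hr (by omega : m ≠ 0)
  have hintegral := integral_exp_neg_sq_mul_le_two_mul_sum (sq_nonneg r) m
  rw [show -((m + m : ℕ) : ℤ) / 2 = -(m : ℤ) by omega,
    show ((m + m : ℕ) : ℤ) / 2 - 1 = m - 1 by omega, Icc_sub_one_right_eq_Ico,
    sum_Ico_neg_eq_sum_range, sum_add_distrib,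
    show -((m + m : ℕ) : ℝ) * δ / 2 = -(m * δ) by push_cast; ring,
    show ((m + m : ℕ) : ℝ) * δ / 2 = m * δ by push_cast; ring,
    integral_exp_neg_sq_div_eq_mul_integral hσ.ne']
  push_cast
  simp only [neg_sq, ge_iff_le]
  set T := ∑ k ∈ range m, exp (-(k : ℝ) ^ 2 * r ^ 2)
  calc δ * ∫ t in -(m : ℝ)..m, exp (-t ^ 2 * r ^ 2) ≤ 2 * δ * T := by nlinarith
    _ ≤ 71 / 50 * √(δ / p) * T := by gcongr
    _ = √(δ / p) * (71 / 50 * T) := by ring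
    _ ≤ √(δ / p) * (T + ∑ k ∈ range m, exp (-((k : ℝ) + 1) ^ 2 * r ^ 2)) := by gcongr; linarith
end

section
/- Let r be a real number with 0 < r ≤ 1/√2, and let p := 1 + e^{π−2π²}·(π^{1/4}/Γ(3/4) − 1), where Γ is the Gamma function. Then Σ_{k∈ℤ} exp(−k²π²/r²) ≤ p. -/
open Real Finset

def prA (c d a : ℕ) : ℕ → ℕ
  | 0 => 1
  | m+1 => prA c d a m * (c*(a+m)+d)

def prB (c d : ℕ) : ℕ → ℕ
  | 0 => 1
  | t+1 => prB c d t * prA c d (100*t) 100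

lemma prA_eq (c d a : ℕ) (m : ℕ) : prA c d a m = ∏ k ∈ range m, (c*(a+k)+d) := by
  induction m with
  | zero => rfl
  | succ m ih => rw [prA, ih, prod_range_succ]

lemma prB_eq (c d : ℕ) (t : ℕ) : prB c d t = ∏ k ∈ range (100*t), (c*k+d) := by
  induction t with
  | zero => rfl
  | succ t ih => rw [prB, ih, prA_eq, Nat.mul_succ, prod_range_add]

set_option maxRecDepth 4000 in
lemma bigineq :
    17724540 * 10^7 * prB 2 1 60 * prB 1 1 60 * prB 0 8 60
      ≤ 12254232^2 * (prB 4 3 60)^2 := by decide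

lemma Gamma_add_nat {x : ℝ} (hx : 0 < x) (n : ℕ) :
    Real.Gamma (x + n) = Real.Gamma x * ∏ k ∈ range n, (x + k) := by
  induction n with
  | zero => simp
  | succ n ih =>
    have h : x + ((n:ℕ)+1 : ℕ) = (x + n) + 1 := by push_cast; ring
    have hx' : x + (n:ℝ) ≠ 0 := by positivity
    rw [h, Real.Gamma_add_one hx', ih, prod_range_succ]
    ring

lemma prod_aff (c d : ℕ) (hc : 0 < c) (n : ℕ) :
    ∏ k ∈ range n, ((d:ℝ)/c + k)
      = ((∏ k ∈ range n, (c*k+d) : ℕ) : ℝ) / (c:ℝ)^n := by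
  have hc' : (0:ℝ) < (c:ℝ) := by exact_mod_cast hc
  induction n with
  | zero => simp
  | succ n ih =>
    rw [prod_range_succ, ih, prod_range_succ]
    push_cast
    field_simp
    ring

/-- generic-n chord bound, fully symbolic -/
lemma chord (n : ℕ) :
    Real.Gamma (3/4) ^ 2 * (((∏ k ∈ range n, (4*k+3) : ℕ) : ℝ) / 4 ^ n) ^ 2
      ≤ Real.sqrt π * (((∏ k ∈ range n, (2*k+1) : ℕ) : ℝ) / 2 ^ n)
          * ((∏ k ∈ range n, (1*k+1) : ℕ) : ℝ) := by
  have hconv := Real.Gamma_mul_add_mul_le_rpow_Gamma_mul_rpow_Gamma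
    (s := 1/2 + n) (t := 1 + n) (a := 1/2) (b := 1/2)
    (by positivity) (by positivity) (by norm_num) (by norm_num) (by norm_num)
  have harg : (1/2 : ℝ) * (1/2 + n) + (1/2 : ℝ) * (1 + n) = 3/4 + n := by ring
  rw [harg] at hconv
  have hG2 : (0:ℝ) < Real.Gamma (1/2 + n) := Real.Gamma_pos_of_pos (by positivity)
  have hG3 : (0:ℝ) < Real.Gamma (1 + n) := Real.Gamma_pos_of_pos (by positivity)
  have h1 : Real.Gamma (3/4 + n) ^ 2 ≤ Real.Gamma (1/2 + n) * Real.Gamma (1 + n) := by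
    calc Real.Gamma (3/4 + n) ^ 2
        ≤ (Real.Gamma (1/2 + n) ^ ((1:ℝ)/2) * Real.Gamma (1 + n) ^ ((1:ℝ)/2)) ^ 2 :=
          pow_le_pow_left₀ (Real.Gamma_pos_of_pos (by positivity)).le hconv 2
      _ = Real.Gamma (1/2 + n) * Real.Gamma (1 + n) := by
          rw [mul_pow, ← Real.rpow_natCast (_ ^ ((1:ℝ)/2)) 2, ← Real.rpow_natCast (_ ^ ((1:ℝ)/2)) 2,
            ← Real.rpow_mul hG2.le, ← Real.rpow_mul hG3.le]
          norm_num
  have e34 : Real.Gamma (3/4 + n)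
      = Real.Gamma (3/4) * (((∏ k ∈ range n, (4*k+3) : ℕ) : ℝ) / 4 ^ n) := by
    rw [Gamma_add_nat (by norm_num) n]
    congr 1
    have := prod_aff 4 3 (by norm_num) n
    norm_num at this ⊢
    rw [← this]
  have e12 : Real.Gamma (1/2 + n)
      = Real.sqrt π * (((∏ k ∈ range n, (2*k+1) : ℕ) : ℝ) / 2 ^ n) := by
    rw [Gamma_add_nat (by norm_num) n, Real.Gamma_one_half_eq]
    congr 1
    have := prod_aff 2 1 (by norm_num) n
    norm_num at this ⊢
    rw [← this]
  have e1 : Real.Gamma (1 + n) = ((∏ k ∈ range n, (1*k+1) : ℕ) : ℝ) := by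
    rw [add_comm, Real.Gamma_nat_eq_factorial, ← Finset.prod_range_add_one_eq_factorial]
    norm_num
  calc Real.Gamma (3/4) ^ 2 * (((∏ k ∈ range n, (4*k+3) : ℕ) : ℝ) / 4 ^ n) ^ 2
      = Real.Gamma (3/4 + n) ^ 2 := by rw [e34]; ring
    _ ≤ Real.Gamma (1/2 + n) * Real.Gamma (1 + n) := h1
    _ = _ := by rw [e12, e1]


/-- Upper bound for Γ(3/4) by log-convexity (chord between n+1/2 and n+1, n = 6000). -/
lemma Gamma_three_quarter_le : Real.Gamma (3/4) ≤ 12254232 / 10^7 := by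
  have h100 : 100 * 60 = 6000 := by norm_num
  obtain ⟨P3, hP3, h3pos⟩ : ∃ m, (∏ k ∈ range 6000, (4*k+3)) = m ∧ 0 < m :=
    ⟨_, rfl, Finset.prod_pos (fun k _ => by omega)⟩
  obtain ⟨P2, hP2, h2pos⟩ : ∃ m, (∏ k ∈ range 6000, (2*k+1)) = m ∧ 0 < m :=
    ⟨_, rfl, Finset.prod_pos (fun k _ => by omega)⟩
  obtain ⟨P1, hP1, h1pos⟩ : ∃ m, (∏ k ∈ range 6000, (1*k+1)) = m ∧ 0 < m :=
    ⟨_, rfl, Finset.prod_pos (fun k _ => by omega)⟩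
  have hc := chord 6000
  rw [hP3, hP2, hP1] at hc
  have key : (17724540:ℝ) * 10^7 * P2 * P1 * 8^(6000:ℕ) ≤ 12254232^2 * (P3:ℝ)^2 := by
    have hb := bigineq
    have eB3 : prB 4 3 60 = P3 := by rw [prB_eq, h100, hP3]
    have eB2 : prB 2 1 60 = P2 := by rw [prB_eq, h100, hP2]
    have eB1 : prB 1 1 60 = P1 := by rw [prB_eq, h100, hP1]
    have eB8 : prB 0 8 60 = 8 ^ (6000:ℕ) := by
      rw [prB_eq, h100]
      simp
    rw [eB3, eB2, eB1, eB8] at hb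
    exact_mod_cast hb
  clear hP3 hP2 hP1
  -- positivity facts
  have hP3pos : (0:ℝ) < (P3:ℝ) := by exact_mod_cast h3pos
  have hP2pos : (0:ℝ) < (P2:ℝ) := by exact_mod_cast h2pos
  have hP1pos : (0:ℝ) < (P1:ℝ) := by exact_mod_cast h1pos
  obtain ⟨x2, hx2d, hx2⟩ : ∃ y:ℝ, 2 ^ (6000:ℕ) = y ∧ (0:ℝ) < y := ⟨_, rfl, by positivity⟩
  obtain ⟨x4, hx4d, hx4⟩ : ∃ y:ℝ, 4 ^ (6000:ℕ) = y ∧ (0:ℝ) < y := ⟨_, rfl, by positivity⟩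
  obtain ⟨x8, hx8d, hx8⟩ : ∃ y:ℝ, 8 ^ (6000:ℕ) = y ∧ (0:ℝ) < y := ⟨_, rfl, by positivity⟩
  rw [hx2d, hx4d] at hc
  rw [hx8d] at key
  have hx : x2 * x8 = x4 ^ 2 := by
    rw [← hx2d, ← hx4d, ← hx8d, ← mul_pow, ← pow_mul]
    have h16 : (2:ℝ) * 8 = 4 ^ (2:ℕ) := by norm_num
    rw [h16, ← pow_mul]
  clear hx2d hx4d hx8d
  -- sqrt pi bound
  have hsqrtpi : Real.sqrt π ≤ 17724540 / 10^7 := by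
    have h1 : π ≤ (17724540 / 10^7 : ℝ)^2 := by
      nlinarith [Real.pi_lt_d6]
    calc Real.sqrt π ≤ Real.sqrt ((17724540 / 10^7 : ℝ)^2) := Real.sqrt_le_sqrt h1
      _ = 17724540 / 10^7 := Real.sqrt_sq (by norm_num)
  have hG34 : (0:ℝ) < Real.Gamma (3/4) := Real.Gamma_pos_of_pos (by norm_num)
  have hkey2 : Real.Gamma (3/4) ^ 2 ≤ (12254232 / 10^7 : ℝ)^2 := by
    have step1 : Real.Gamma (3/4) ^ 2 * ((P3:ℝ) / x4) ^ 2
        ≤ (17724540 / 10^7) * ((P2:ℝ) / x2) * (P1:ℝ) := by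
      refine le_trans hc ?_
      have hnn : (0:ℝ) ≤ ((P2:ℝ) / x2) * (P1:ℝ) := by positivity
      nlinarith [hsqrtpi, hnn, hP1pos, hP2pos, hx2]
    have step2 : (17724540 / 10^7 : ℝ) * ((P2:ℝ) / x2) * (P1:ℝ)
        ≤ (12254232 / 10^7 : ℝ)^2 * ((P3:ℝ) / x4) ^ 2 := by
      have e1 : (17724540 / 10^7 : ℝ) * ((P2:ℝ) / x2) * (P1:ℝ)
          = (17724540 * 10^7 * (P2:ℝ) * P1 * x8) / ((10^7)^2 * (x2 * x8)) := by
        field_simp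
      have e2 : (12254232 / 10^7 : ℝ)^2 * ((P3:ℝ) / x4) ^ 2
          = (12254232^2 * (P3:ℝ)^2) / ((10^7)^2 * (x2 * x8)) := by
        rw [hx]
        field_simp
        try ring
      rw [e1, e2]
      gcongr
    have hfrac : (0:ℝ) < ((P3:ℝ) / x4) ^ 2 := by positivity
    have hcomb := le_trans step1 step2
    calc Real.Gamma (3/4) ^ 2
        = Real.Gamma (3/4) ^ 2 * ((P3:ℝ) / x4) ^ 2 / ((P3:ℝ) / x4) ^ 2 := by
          field_simp
          try ring
      _ ≤ (12254232 / 10^7 : ℝ)^2 * ((P3:ℝ) / x4) ^ 2 / ((P3:ℝ) / x4) ^ 2 := by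
          gcongr
      _ = (12254232 / 10^7 : ℝ)^2 := by
          field_simp
          try ring
  exact le_of_pow_le_pow_left₀ (by norm_num) (by norm_num) hkey2

lemma exp_neg_pi_le : Real.exp (-π) ≤ 4321395/10^8 := by
  have hx : (0:ℝ) ≤ 3141592/10^6 := by norm_num
  have hS := Real.sum_le_exp_of_nonneg hx 25
  have hSval : (23140676/10^6 : ℝ) ≤ ∑ i ∈ Finset.range 25, (3141592/10^6:ℝ) ^ i / (Nat.factorial i) := by
    norm_num [Finset.sum_range_succ, Nat.factorial]
  have hexp : (23140676/10^6 : ℝ) ≤ Real.exp (3141592/10^6) := le_trans hSval hS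
  have hpi : (3141592/10^6 : ℝ) ≤ π := by
    have := Real.pi_gt_d6
    norm_num at this ⊢
    linarith
  have h1 : Real.exp (-π) ≤ Real.exp (-(3141592/10^6)) := by
    apply Real.exp_le_exp.mpr
    linarith
  refine le_trans h1 ?_
  rw [Real.exp_neg]
  rw [inv_le_comm₀ (Real.exp_pos _) (by norm_num)]
  refine le_trans ?_ hexp
  norm_num

lemma exp_neg_big_le : Real.exp (-(6*π^2) - π) ≤ 1/10^20 := by
  have hpi := Real.pi_gt_three
  have h1 : Real.exp (-(6*π^2) - π) ≤ Real.exp (-(55:ℝ)) := by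
    apply Real.exp_le_exp.mpr
    nlinarith
  refine le_trans h1 ?_
  rw [Real.exp_neg, inv_le_comm₀ (Real.exp_pos _) (by norm_num)]
  have h2 : ((10:ℝ)^20)⁻¹⁻¹ = 10^20 := by norm_num
  have h3 : ((2.7:ℝ))^(55:ℕ) ≤ (Real.exp 1)^(55:ℕ) :=
    pow_le_pow_left₀ (by norm_num) (le_of_lt (by have := Real.exp_one_gt_d9; norm_num at this ⊢; linarith)) 55
  have h4 : (Real.exp 1)^(55:ℕ) = Real.exp 55 := by
    rw [← Real.exp_nat_mul]
    norm_num
  rw [show ((1:ℝ)/10^20)⁻¹ = 10^20 by norm_num, ← h4]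
  refine le_trans ?_ h3
  norm_num

lemma pi_quarter_ge : (13313352/10^7 : ℝ) ≤ π ^ ((1:ℝ)/4) := by
  have hpi := Real.pi_gt_d6
  have h : ((13313352/10^7:ℝ))^(4:ℕ) ≤ π := by
    norm_num at hpi ⊢
    nlinarith
  calc (13313352/10^7 : ℝ) = (((13313352/10^7 : ℝ))^(4:ℕ)) ^ ((1:ℝ)/4) := by
        rw [← Real.rpow_natCast _ 4, ← Real.rpow_mul (by norm_num)]
        norm_num
    _ ≤ π ^ ((1:ℝ)/4) := Real.rpow_le_rpow (by positivity) h (by norm_num)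

lemma const_le :
    2*Real.exp (-π) + 4*Real.exp (-(6*π^2) - π)
      ≤ π ^ ((1:ℝ)/4) / Real.Gamma (3/4) - 1 := by
  have hG : (0:ℝ) < Real.Gamma (3/4) := Real.Gamma_pos_of_pos (by norm_num)
  have h5 : (13313352/10^7 : ℝ)/(12254232/10^7) ≤ π ^ ((1:ℝ)/4) / Real.Gamma (3/4) :=
    div_le_div₀ (by positivity) pi_quarter_ge hG Gamma_three_quarter_le
  have h6 : (1 : ℝ) + (2*(4321395/10^8) + 4*(1/10^20)) ≤ (13313352/10^7 : ℝ)/(12254232/10^7) := by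
    norm_num
  have h7 := exp_neg_pi_le
  have h8 := exp_neg_big_le
  linarith

set_option maxHeartbeats 2000000 in
/-- For 0 < r ≤ 1/√2, the theta sum Σ_{k∈ℤ} exp(−k²π²/r²) is bounded by
p := 1 + e^{π−2π²}·(π^{1/4}/Γ(3/4) − 1). -/
theorem theta_sum_le_p (r : ℝ) (hr0 : 0 < r) (hr : r ≤ 1 / Real.sqrt 2) :
    ∑' k : ℤ, Real.exp (-(k:ℝ)^2 * Real.pi^2 / r^2)
      ≤ 1 + Real.exp (Real.pi - 2 * Real.pi^2) *
          (Real.pi ^ ((1:ℝ)/4) / Real.Gamma (3/4) - 1) := by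
  have hr2 : r^2 ≤ 1/2 := by
    have h2 : (0:ℝ) < Real.sqrt 2 := Real.sqrt_pos.mpr (by norm_num)
    have hsq : (1 / Real.sqrt 2 : ℝ)^2 = 1/2 := by
      rw [div_pow, Real.sq_sqrt (by norm_num : (0:ℝ) ≤ 2)]
      norm_num
    calc r^2 ≤ (1 / Real.sqrt 2)^2 := pow_le_pow_left₀ hr0.le hr 2
      _ = 1/2 := hsq
  have hr2pos : (0:ℝ) < r^2 := by positivity
  set a : ℝ := π^2 / r^2 with ha_def
  have ha0 : 0 < a := by positivity
  have ha : 2*π^2 ≤ a := by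
    rw [ha_def, le_div_iff₀ hr2pos]
    nlinarith [Real.pi_pos]
  have ha1 : (1:ℝ) ≤ a := by nlinarith [Real.pi_gt_three]
  -- the natural-number-indexed function
  set g : ℕ → ℝ := fun n => Real.exp (-((n:ℝ)^2 * a)) with hg_def
  have hgle : ∀ n : ℕ, g n ≤ Real.exp (-a) ^ n := by
    intro n
    rw [← Real.exp_nat_mul]
    apply Real.exp_le_exp.mpr
    have hn : (n:ℝ) ≤ (n:ℝ)^2 := by
      have := Nat.le_self_pow (by norm_num : (2:ℕ) ≠ 0) n
      exact_mod_cast this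
    nlinarith
  have hgeom : Summable (fun n:ℕ => Real.exp (-a) ^ n) :=
    summable_geometric_of_lt_one (Real.exp_pos _).le
      (Real.exp_lt_one_iff.mpr (by linarith))
  have hgsum : Summable g :=
    Summable.of_nonneg_of_le (fun n => (Real.exp_pos _).le) hgle hgeom
  have hgsum1 : Summable (fun n:ℕ => g (n+1)) := by
    exact (summable_nat_add_iff 1).mpr hgsum
  have hgsum2 : Summable (fun n:ℕ => g (n+2)) := by
    exact (summable_nat_add_iff 2).mpr hgsum
  -- identification of the two halves of the integer sum
  have hizp : (fun n:ℕ => Real.exp (-((n:ℤ):ℝ)^2 * π^2 / r^2)) = g := by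
    funext n
    rw [hg_def]
    congr 1
    push_cast
    rw [ha_def]
    ring
  have hizn : (fun n:ℕ => Real.exp (-((((-(n+1):ℤ)):ℝ))^2 * π^2 / r^2)) = fun n => g (n+1) := by
    funext n
    rw [hg_def]
    congr 1
    push_cast
    rw [ha_def]
    ring
  have hsumZp : Summable (fun n:ℕ => Real.exp (-((n:ℤ):ℝ)^2 * π^2 / r^2)) := by
    rw [hizp]; exact hgsum
  have hsumZn : Summable (fun n:ℕ => Real.exp (-((((-(n+1):ℤ)):ℝ))^2 * π^2 / r^2)) := by
    rw [hizn]; exact hgsum1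
  have hsplit : ∑' k : ℤ, Real.exp (-(k:ℝ)^2 * π^2 / r^2)
      = (∑' n : ℕ, g n) + ∑' n : ℕ, g (n+1) := by
    rw [tsum_of_nat_of_neg_add_one (f := fun k : ℤ => Real.exp (-(k:ℝ)^2 * π^2 / r^2)) hsumZp hsumZn, hizp, hizn]
  have hzero : ∑' n : ℕ, g n = 1 + ∑' n : ℕ, g (n+1) := by
    rw [Summable.tsum_eq_zero_add hgsum]
    congr 1
    rw [hg_def]
    norm_num
  -- bound T = ∑' n, g (n+1)
  have hx2 : Real.exp (-(2*a)) ≤ 1/2 := by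
    have h1 : Real.exp (-(2*a)) ≤ Real.exp (-1:ℝ) := Real.exp_le_exp.mpr (by linarith)
    have h2 : Real.exp (-1:ℝ) = (Real.exp 1)⁻¹ := Real.exp_neg 1
    have h3 : (2:ℝ) ≤ Real.exp 1 := by
      have := Real.exp_one_gt_d9; norm_num at this ⊢; linarith
    refine le_trans h1 ?_
    rw [h2, inv_le_comm₀ (Real.exp_pos _) (by norm_num)]
    norm_num
    linarith
  have htail : ∑' n : ℕ, g (n+2) ≤ 2 * Real.exp (-(4*a)) := by
    have hterm : ∀ n : ℕ, g (n+2) ≤ Real.exp (-(2*a)) ^ (n+2) := by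
      intro n
      rw [hg_def, ← Real.exp_nat_mul]
      apply Real.exp_le_exp.mpr
      push_cast
      nlinarith [ha0, sq_nonneg ((n:ℝ))]
    have hgeom2 : Summable (fun n:ℕ => Real.exp (-(2*a)) ^ (n+2)) :=
      (summable_nat_add_iff 2).mpr (summable_geometric_of_lt_one (Real.exp_pos _).le
        (Real.exp_lt_one_iff.mpr (by linarith)))
    have h1 : ∑' n : ℕ, g (n+2) ≤ ∑' n : ℕ, Real.exp (-(2*a)) ^ (n+2) :=
      Summable.tsum_le_tsum hterm hgsum2 hgeom2
    refine le_trans h1 ?_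
    have h2 : ∀ n : ℕ, Real.exp (-(2*a)) ^ (n+2) = Real.exp (-(2*a)) ^ n * Real.exp (-(2*a))^2 := by
      intro n; rw [pow_add]
    rw [tsum_congr h2, tsum_mul_right,
      tsum_geometric_of_lt_one (Real.exp_pos _).le (Real.exp_lt_one_iff.mpr (by linarith))]
    have h3 : (1 - Real.exp (-(2*a)))⁻¹ ≤ 2 := by
      rw [inv_le_comm₀ (by linarith [Real.exp_pos (-(2*a))]) (by norm_num)]
      linarith
    have h4 : Real.exp (-(2*a))^2 = Real.exp (-(4*a)) := by
      rw [← Real.exp_nat_mul]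
      congr 1
      push_cast
      ring
    rw [h4]
    have h5 : (0:ℝ) < Real.exp (-(4*a)) := Real.exp_pos _
    nlinarith
  have hT : ∑' n : ℕ, g (n+1) ≤ Real.exp (-a) + 2 * Real.exp (-(4*a)) := by
    have h0 : ∑' n : ℕ, g (n+1) = g 1 + ∑' n : ℕ, g (n+2) := by
      rw [Summable.tsum_eq_zero_add hgsum1]
    rw [h0]
    have hg1 : g 1 = Real.exp (-a) := by rw [hg_def]; norm_num
    rw [hg1]
    linarith [htail]
  -- final assembly
  have hmain : 2 * (Real.exp (-a) + 2 * Real.exp (-(4*a)))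
      ≤ Real.exp (π - 2*π^2) * (π ^ ((1:ℝ)/4) / Real.Gamma (3/4) - 1) := by
    have h1 : Real.exp (-a) ≤ Real.exp (π - 2*π^2) * Real.exp (-π) := by
      rw [← Real.exp_add]
      apply Real.exp_le_exp.mpr
      linarith
    have h2 : Real.exp (-(4*a)) ≤ Real.exp (π - 2*π^2) * Real.exp (-(6*π^2) - π) := by
      rw [← Real.exp_add]
      apply Real.exp_le_exp.mpr
      linarith
    have h3 := const_le
    have h4 : (0:ℝ) < Real.exp (π - 2*π^2) := Real.exp_pos _
    nlinarith [Real.exp_pos (-π), Real.exp_pos (-(6*π^2) - π)]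
  calc ∑' k : ℤ, Real.exp (-(k:ℝ)^2 * π^2 / r^2)
      = 1 + 2 * ∑' n : ℕ, g (n+1) := by rw [hsplit, hzero]; ring
    _ ≤ 1 + 2 * (Real.exp (-a) + 2 * Real.exp (-(4*a))) := by linarith [hT]
    _ ≤ 1 + Real.exp (π - 2*π^2) * (π ^ ((1:ℝ)/4) / Real.Gamma (3/4) - 1) := by linarith [hmain]
end

section
/- Let N be a positive integer, let ε ∈ [0,1) with N·ε < 1, and let E be a real N×N matrix with |E_{ij}| ≤ ε for all indices i, j. Then 1 − N·ε ≤ det(I − E) ≤ (1 − N·ε)^{−1}, where I is the N×N identity matrix. -/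
open Matrix

lemma det_near_identity_aux :
    ∀ (n : ℕ) (ε : ℝ), 0 ≤ ε → (n:ℝ) * ε < 1 →
    ∀ E : Matrix (Fin n) (Fin n) ℝ, (∀ i j, |E i j| ≤ ε) →
    1 - (n:ℝ) * ε ≤ (1 - E).det ∧ (1 - E).det ≤ (1 - (n:ℝ) * ε)⁻¹ := by
  intro n
  induction n with
  | zero =>
      intro ε hε0 hnε E hE
      simp [Matrix.det_fin_zero]
  | succ n IH =>
      intro ε hε0 hnε E hE
      push_cast at hnε
      have hn0 : (0:ℝ) ≤ (n:ℝ) := Nat.cast_nonneg n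
      have hε1 : ε < 1 := by nlinarith
      have h1ε : (1:ℝ) - ε ≠ 0 := by linarith
      set d : ℝ := 1 - E (Fin.last n) (Fin.last n) with hd_def
      have hElast := hE (Fin.last n) (Fin.last n)
      have hd_lb : 1 - ε ≤ d := by
        have := abs_le.mp hElast
        simp only [hd_def]; linarith [this.2]
      have hd_ub : d ≤ 1 + ε := by
        have := abs_le.mp hElast
        simp only [hd_def]; linarith [this.1]
      have hd_pos : 0 < d := by linarith
      set ε' : ℝ := ε / (1 - ε) with hε'_def
      have hε'0 : 0 ≤ ε' := div_nonneg hε0 (by linarith)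
      have hnε' : (n:ℝ) * ε' < 1 := by
        rw [hε'_def, ← mul_div_assoc, div_lt_one (by linarith)]
        nlinarith
      set E' : Matrix (Fin n) (Fin n) ℝ :=
        Matrix.of (fun i j => E i.castSucc j.castSucc +
          E i.castSucc (Fin.last n) * E (Fin.last n) j.castSucc / d) with hE'_def
      have hE' : ∀ i j, |E' i j| ≤ ε' := by
        intro i j
        have h1 := hE i.castSucc j.castSucc
        have h2 := hE i.castSucc (Fin.last n)
        have h3 := hE (Fin.last n) j.castSucc
        have habs : |E i.castSucc (Fin.last n) * E (Fin.last n) j.castSucc / d|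
            ≤ ε * ε / (1 - ε) := by
          rw [abs_div, abs_mul, abs_of_pos hd_pos]
          exact div_le_div₀ (by positivity)
            (mul_le_mul h2 h3 (abs_nonneg _) hε0) (by linarith) hd_lb
        have hsum : ε + ε * ε / (1 - ε) = ε' := by
          rw [hε'_def]; field_simp; ring
        calc |E' i j| ≤ |E i.castSucc j.castSucc| +
              |E i.castSucc (Fin.last n) * E (Fin.last n) j.castSucc / d| := abs_add_le _ _
          _ ≤ ε + ε * ε / (1 - ε) := add_le_add h1 habs
          _ = ε' := hsum
      obtain ⟨hlo, hhi⟩ := IH ε' hε'0 hnε' E' hE'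
      -- block decomposition
      set M : Matrix (Fin (n+1)) (Fin (n+1)) ℝ := 1 - E with hM_def
      set A : Matrix (Fin n) (Fin n) ℝ := Matrix.of (fun i j => M i.castSucc j.castSucc)
      set B : Matrix (Fin n) (Fin 1) ℝ := Matrix.of (fun i _ => M i.castSucc (Fin.last n))
      set C : Matrix (Fin 1) (Fin n) ℝ := Matrix.of (fun _ j => M (Fin.last n) j.castSucc)
      set D : Matrix (Fin 1) (Fin 1) ℝ := Matrix.of (fun _ _ => d)
      set Dinv : Matrix (Fin 1) (Fin 1) ℝ := Matrix.of (fun _ _ => d⁻¹)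
      have hDD : D * Dinv = 1 := by
        ext i j
        fin_cases i; fin_cases j
        simp [D, Dinv, Matrix.mul_apply, Fin.sum_univ_one, mul_inv_cancel₀ hd_pos.ne']
      have hDD' : Dinv * D = 1 := by
        ext i j
        fin_cases i; fin_cases j
        simp [D, Dinv, Matrix.mul_apply, Fin.sum_univ_one, inv_mul_cancel₀ hd_pos.ne']
      haveI : Invertible D := ⟨Dinv, hDD', hDD⟩
      have hinl : ∀ i : Fin n, (finSumFinEquiv (Sum.inl i) : Fin (n+1)) = i.castSucc :=
        fun i => rfl
      have hinr : ∀ j : Fin 1, (finSumFinEquiv (Sum.inr j) : Fin (n+1)) = Fin.last n := by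
        intro j; fin_cases j; apply Fin.ext; simp [finSumFinEquiv]
      have hblock : M.submatrix finSumFinEquiv finSumFinEquiv = fromBlocks A B C D := by
        ext i j
        cases i with
        | inl i => cases j with
          | inl j => simp [Matrix.fromBlocks, A, Matrix.submatrix_apply, hinl]
          | inr j => simp [Matrix.fromBlocks, B, Matrix.submatrix_apply, hinl, hinr]
        | inr i => cases j with
          | inl j => simp [Matrix.fromBlocks, C, Matrix.submatrix_apply, hinl, hinr]
          | inr j =>
              simp [Matrix.fromBlocks, D, Matrix.submatrix_apply, hinr, hM_def, hd_def]
      have hSchur : A - B * ⅟D * C = 1 - E' := by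
        ext i j
        have hinv : (⅟D : Matrix (Fin 1) (Fin 1) ℝ) = Dinv := invOf_eq_right_inv hDD
        have hne : ∀ k : Fin n, k.castSucc ≠ Fin.last n :=
          fun k => (Fin.castSucc_lt_last k).ne
        have hne' : ∀ k : Fin n, Fin.last n ≠ k.castSucc := fun k => (hne k).symm
        by_cases hij : i = j <;>
          simp [hinv, Matrix.mul_apply, Fin.sum_univ_one, A, B, C, Dinv, E', hM_def,
            Matrix.one_apply, hij, Fin.castSucc_inj, hne, hne', div_eq_mul_inv] <;> ring
      have hdet : M.det = d * (1 - E').det := by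
        rw [← Matrix.det_submatrix_equiv_self finSumFinEquiv M, hblock,
          Matrix.det_fromBlocks₂₂, hSchur]
        congr 1
        simp [Matrix.det_fin_one, D]
      rw [hM_def] at hdet
      push_cast
      have h1pos : 0 < 1 - ((n:ℝ)+1) * ε := by linarith
      have hε'pos : 0 < 1 - (n:ℝ) * ε' := by linarith
      have key : 1 - (n:ℝ) * ε' = (1 - ((n:ℝ)+1) * ε) / (1 - ε) := by
        rw [hε'_def]; field_simp; ring
      constructor
      · rw [hdet]
        have heq : (1 - ε) * ((1 - ((n:ℝ)+1) * ε) / (1 - ε)) = 1 - ((n:ℝ)+1) * ε := by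
          field_simp
        calc 1 - ((n:ℝ)+1) * ε = (1 - ε) * ((1 - ((n:ℝ)+1) * ε) / (1 - ε)) := heq.symm
          _ ≤ d * (1 - E').det :=
            mul_le_mul hd_lb (by rw [← key]; exact hlo) (by rw [← key]; positivity)
              (by linarith)
      · rw [hdet]
        have hdetpos : 0 ≤ (1 - E').det := le_trans (by positivity) hlo
        have hhi' : (1 - E').det ≤ (1 - ε) / (1 - ((n:ℝ)+1) * ε) := by
          rw [key, inv_div] at hhi
          exact hhi
        calc d * (1 - E').det ≤ (1 + ε) * ((1 - ε) / (1 - ((n:ℝ)+1) * ε)) :=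
              mul_le_mul hd_ub hhi' hdetpos (by linarith)
          _ ≤ (1 - ((n:ℝ)+1) * ε)⁻¹ := by
              rw [inv_eq_one_div, ← mul_div_assoc, div_le_div_iff₀ h1pos h1pos]
              nlinarith [mul_nonneg (mul_self_nonneg ε) h1pos.le]

/-- Bound on the determinant of a near-identity matrix. -/
theorem det_near_identity_bound
    (N : ℕ) (hN : 0 < N) (ε : ℝ) (hε0 : 0 ≤ ε) (hε1 : ε < 1)
    (hNε : (N:ℝ) * ε < 1) (E : Matrix (Fin N) (Fin N) ℝ)
    (hE : ∀ i j, |E i j| ≤ ε) :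
    1 - (N:ℝ) * ε ≤ (1 - E).det ∧ (1 - E).det ≤ (1 - (N:ℝ) * ε)⁻¹ :=
  det_near_identity_aux N ε hε0 hNε E hE
end

section
/- Let N be a positive integer, let A be a real symmetric positive-definite N×N matrix with smallest eigenvalue γ > 0, let ε ∈ (0,1), and let ε_th satisfy 0 < ε_th ≤ ε · γ · N^{−3/2}. If A' is a real symmetric N×N matrix with |A_{ij} − A'_{ij}| ≤ ε_th for all indices i, j, then A' is positive definite. -/
/-!
If every eigenvalue of the Hermitian matrix `A` is at least `γ`, then `A - γ • 1` is positive
semidefinite, so `xᵀ A x ≥ γ ‖x‖²`. An entrywise perturbation of size at most `δ` changes the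
quadratic form by at most `δ (∑ |xᵢ|)² ≤ δ N ‖x‖²`, and `δ N ≤ ε γ N^{-1/2} < γ`.
-/

open scoped ComplexOrder

namespace Matrix

variable {n : Type*} [Fintype n]

theorem abs_dotProduct_mulVec_le {M : Matrix n n ℝ} {δ : ℝ} (hM : ∀ i j, |M i j| ≤ δ)
    (x : n → ℝ) : |x ⬝ᵥ M *ᵥ x| ≤ δ * (∑ i, |x i|) ^ 2 :=
  calc |x ⬝ᵥ M *ᵥ x| = |∑ i, ∑ j, x i * M i j * x j| := by
        simp only [dotProduct, mulVec, Finset.mul_sum, mul_assoc]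
    _ ≤ ∑ i, ∑ j, |x i| * δ * |x j| := by
        refine (Finset.abs_sum_le_sum_abs _ _).trans (Finset.sum_le_sum fun i _ => ?_)
        refine (Finset.abs_sum_le_sum_abs _ _).trans (Finset.sum_le_sum fun j _ => ?_)
        rw [abs_mul, abs_mul]
        gcongr
        exact hM i j
    _ = δ * (∑ i, |x i|) ^ 2 := by
        rw [sq, Finset.sum_mul_sum, Finset.mul_sum]
        simp only [Finset.mul_sum]
        exact Finset.sum_congr rfl fun i _ => Finset.sum_congr rfl fun j _ => by ring

theorem sq_sum_abs_le_card_mul_dotProduct_self (x : n → ℝ) :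
    (∑ i, |x i|) ^ 2 ≤ Fintype.card n * (x ⬝ᵥ x) := by
  simpa [dotProduct, sq_abs, sq] using
    sq_sum_le_card_mul_sum_sq (s := Finset.univ) (f := fun i => |x i|)

theorem abs_dotProduct_mulVec_le_card_mul {M : Matrix n n ℝ} {δ : ℝ} (hδ : 0 ≤ δ)
    (hM : ∀ i j, |M i j| ≤ δ) (x : n → ℝ) :
    |x ⬝ᵥ M *ᵥ x| ≤ δ * Fintype.card n * (x ⬝ᵥ x) := by
  rw [mul_assoc]
  exact (abs_dotProduct_mulVec_le hM x).trans
    (mul_le_mul_of_nonneg_left (sq_sum_abs_le_card_mul_dotProduct_self x) hδ)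

variable [DecidableEq n]

theorem IsHermitian.posSemidef_sub_smul_one {𝕜 : Type*} [RCLike 𝕜] {A : Matrix n n 𝕜}
    (hA : A.IsHermitian) {γ : ℝ} (hγ : ∀ i, γ ≤ hA.eigenvalues i) :
    (A - (γ : 𝕜) • 1).PosSemidef := by
  set U : Matrix n n 𝕜 := (hA.eigenvectorUnitary : Matrix n n 𝕜)
  have hdiag :
      (diagonal (RCLike.ofReal ∘ hA.eigenvalues) - (γ : 𝕜) • 1 : Matrix n n 𝕜).PosSemidef := by
    rw [smul_one_eq_diagonal, diagonal_sub]
    refine PosSemidef.diagonal fun i => ?_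
    simpa [RCLike.ofReal_le_ofReal] using hγ i
  have hUU : U * Uᴴ = 1 := Unitary.coe_mul_star_self hA.eigenvectorUnitary
  convert hdiag.mul_mul_conjTranspose_same U using 1
  conv_lhs => rw [hA.spectral_theorem]
  simp [U, Unitary.conjStarAlgAut_apply, star_eq_conjTranspose, mul_sub, sub_mul, hUU]

theorem IsHermitian.mul_dotProduct_self_le_dotProduct_mulVec {A : Matrix n n ℝ}
    (hA : A.IsHermitian) {γ : ℝ} (hγ : ∀ i, γ ≤ hA.eigenvalues i) (x : n → ℝ) :
    γ * (x ⬝ᵥ x) ≤ x ⬝ᵥ A *ᵥ x := by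
  have h := (hA.posSemidef_sub_smul_one hγ).dotProduct_mulVec_nonneg x
  rw [star_trivial, sub_mulVec, smul_mulVec, one_mulVec, dotProduct_sub, dotProduct_smul] at h
  simpa [sub_nonneg] using h

theorem IsHermitian.posDef_of_abs_sub_le {A B : Matrix n n ℝ} (hA : A.IsHermitian)
    (hB : B.IsSymm) {γ δ : ℝ} (hγ : ∀ i, γ ≤ hA.eigenvalues i) (hδ : 0 ≤ δ)
    (hAB : ∀ i j, |A i j - B i j| ≤ δ) (hδγ : δ * Fintype.card n < γ) : B.PosDef := by
  refine posDef_iff_dotProduct_mulVec.mpr ⟨isHermitian_iff_isSymm.mpr hB, fun x hx => ?_⟩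
  have hx : 0 < x ⬝ᵥ x := by simpa using dotProduct_self_star_pos_iff.mpr hx
  have hlow := hA.mul_dotProduct_self_le_dotProduct_mulVec hγ x
  have hpert := abs_dotProduct_mulVec_le_card_mul hδ (M := A - B) hAB x
  rw [sub_mulVec, dotProduct_sub] at hpert
  rw [star_trivial]
  nlinarith [(abs_le.mp hpert).2, mul_lt_mul_of_pos_right hδγ hx]

end Matrix

theorem natCast_mul_rpow_neg_three_halves_le_one {N : ℕ} (hN : 0 < N) :
    (N : ℝ) * (N : ℝ) ^ (-(3:ℝ)/2) ≤ 1 := by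
  have hN1 : (1 : ℝ) ≤ N := by exact_mod_cast hN
  calc (N : ℝ) * (N : ℝ) ^ (-(3:ℝ)/2) ≤ N * (N : ℝ) ^ (-1 : ℝ) := by
        gcongr
        norm_num
    _ = 1 := by rw [Real.rpow_neg_one, mul_inv_cancel₀ (by positivity)]

theorem perturbed_matrix_posDef_general
    (N : ℕ) (hN : 0 < N) (A A' : Matrix (Fin N) (Fin N) ℝ)
    (hA : A.IsHermitian) (γ : ℝ) (hγpos : 0 < γ)
    (hγ : IsLeast (Set.range hA.eigenvalues) γ)
    (ε εth : ℝ) (hε : ε ∈ Set.Ioo (0:ℝ) 1)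
    (hth0 : 0 < εth) (hth : εth ≤ ε * γ * (N:ℝ) ^ (-(3:ℝ)/2))
    (hA' : A'.IsSymm) (hdiff : ∀ i j, |A i j - A' i j| ≤ εth) :
    A'.PosDef := by
  refine hA.posDef_of_abs_sub_le hA' (fun i => hγ.2 ⟨i, rfl⟩) hth0.le hdiff ?_
  have hεγ : 0 ≤ ε * γ := mul_nonneg hε.1.le hγpos.le
  calc εth * Fintype.card (Fin N) ≤ ε * γ * (N:ℝ) ^ (-(3:ℝ)/2) * N := by
        rw [Fintype.card_fin]
        gcongr
    _ = ε * γ * ((N:ℝ) * (N:ℝ) ^ (-(3:ℝ)/2)) := by ring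
    _ ≤ ε * γ := mul_le_of_le_one_right hεγ (natCast_mul_rpow_neg_three_halves_le_one hN)
    _ < γ := mul_lt_of_lt_one_left hγpos hε.2

/-- An entrywise ε_th-perturbation of a symmetric positive-definite matrix with
smallest eigenvalue γ remains positive definite when ε_th ≤ ε·γ·N^{−3/2}. -/
theorem perturbed_matrix_posDef
    (N : ℕ) (hN : 0 < N) (A A' : Matrix (Fin N) (Fin N) ℝ)
    (hA : A.IsHermitian) (hPD : A.PosDef) (γ : ℝ) (hγpos : 0 < γ)
    (hγ : IsLeast (Set.range hA.eigenvalues) γ)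
    (ε εth : ℝ) (hε : ε ∈ Set.Ioo (0:ℝ) 1)
    (hth0 : 0 < εth) (hth : εth ≤ ε * γ * (N:ℝ) ^ (-(3:ℝ)/2))
    (hA' : A'.IsSymm) (hdiff : ∀ i j, |A i j - A' i j| ≤ εth) :
    A'.PosDef :=
  perturbed_matrix_posDef_general N hN A A' hA γ hγpos hγ ε εth hε hth0 hth hA' hdiff
end

section
/- Let N be a positive integer, let ε ∈ (0,1), and let T be a real N×N matrix with |T_{ij}| ≤ ε/N for all indices i, j. Then det(I − T) ≥ 1 − ε > 0, det(I − T/2) > 0, and det(I − T)^{1/4} / det(I − T/2)^{1/2} ≥ 1 − ε. -/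
/-!
Along the segment `t ↦ 1 - t • T`, Jacobi's formula gives
`(log det (1 - t • T))' = -tr ((1 - t • T)⁻¹ * T)`. In the ℓ∞ operator norm `‖T‖ ≤ ε`, so the
Neumann series bounds `‖(1 - t • T)⁻¹‖` by `1 / (1 - t ε)`, and the entry bound `ε / N` gives
`|tr (R * T)| ≤ ε ‖R‖`. The derivative is therefore dominated by `ε / (1 - t ε)`, the derivative
of `-log (1 - t ε)`, whence `1 - s ε ≤ det (1 - s • T) ≤ (1 - s ε)⁻¹` for `s ∈ [0, 1]`. Finally
`(1 - ε)^(1/4) (1 - ε/2)^(1/2) ≥ (1 - ε)^(3/4) ≥ 1 - ε`.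
-/

open Matrix Polynomial Set

theorem IsPreconnected.pos_of_ne_zero {X : Type*} [TopologicalSpace X] {s : Set X}
    (hs : IsPreconnected s) {f : X → ℝ} (hf : ContinuousOn f s) (hne : ∀ x ∈ s, f x ≠ 0)
    {a x : X} (ha : a ∈ s) (hfa : 0 < f a) (hx : x ∈ s) : 0 < f x := by
  by_contra! hfx
  obtain ⟨c, hc, hfc⟩ := hs.intermediate_value hx ha hf ⟨hfx, hfa.le⟩
  exact hne c hc hfc

theorem natCast_mul_div_natCast_le (k : ℕ) {ε : ℝ} (hε : 0 ≤ ε) : (k : ℝ) * (ε / k) ≤ ε := by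
  rcases eq_or_ne (k : ℝ) 0 with h | h <;> simp [h, hε, mul_div_cancel₀]

theorem norm_inverse_one_sub_le {R : Type*} [NormedRing R] [HasSummableGeomSeries R]
    (hone : ‖(1 : R)‖ ≤ 1) {x : R} (hx : ‖x‖ < 1) :
    ‖Ring.inverse (1 - x)‖ ≤ (1 - ‖x‖)⁻¹ := by
  rw [NormedRing.inverse_one_sub x hx]
  exact (tsum_geometric_le_of_norm_lt_one x hx).trans (by linarith)

namespace Matrix

variable {n : Type*} [Fintype n] [DecidableEq n]

section Jacobi

variable {𝕜 : Type*} [NontriviallyNormedField 𝕜]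

theorem hasDerivAt_det_one_add_smul (M : Matrix n n 𝕜) :
    HasDerivAt (fun r : 𝕜 => (1 + r • M).det) M.trace 0 := by
  have h : (fun r : 𝕜 => (1 + r • M).det) = fun r => (det (1 + (X : 𝕜[X]) • M.map C)).eval r := by
    ext r; simp [eval_det, ← smul_eq_mul_diagonal]
  rw [h, ← derivative_det_one_add_X_smul]
  exact Polynomial.hasDerivAt _ 0

theorem hasDerivAt_det_add_smul (A B : Matrix n n 𝕜) {t₀ : 𝕜} (h : IsUnit (A + t₀ • B).det) :
    HasDerivAt (fun t => (A + t • B).det) ((A + t₀ • B).det * ((A + t₀ • B)⁻¹ * B).trace) t₀ := by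
  set C := A + t₀ • B
  have hfactor : ∀ t : 𝕜, A + t • B = C * (1 + (t - t₀) • (C⁻¹ * B)) := fun t => by
    rw [mul_add, mul_one, Matrix.mul_smul, mul_nonsing_inv_cancel_left _ _ h, sub_smul]
    simp only [C]
    abel
  simp only [hfactor, det_mul]
  have h0 := hasDerivAt_det_one_add_smul (C⁻¹ * B)
  rw [← sub_self t₀] at h0
  exact (h0.comp_sub_const t₀ t₀).const_mul _

theorem hasDerivAt_det_one_sub_smul (T : Matrix n n 𝕜) {t₀ : 𝕜} (h : IsUnit (1 - t₀ • T).det) :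
    HasDerivAt (fun t => (1 - t • T).det)
      (-((1 - t₀ • T).det * ((1 - t₀ • T)⁻¹ * T).trace)) t₀ := by
  simp_rw [sub_eq_add_neg, ← smul_neg] at h ⊢
  simpa using hasDerivAt_det_add_smul 1 (-T) h

end Jacobi

section LinftyNorm

attribute [local instance] Matrix.linftyOpNormedRing Matrix.linftyOpNormedAlgebra

theorem linfty_opNorm_one_le : ‖(1 : Matrix n n ℝ)‖ ≤ 1 := by
  rw [← diagonal_one, linfty_opNorm_diagonal]
  exact pi_norm_le_iff_of_nonneg zero_le_one |>.2 fun _ => by simp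

theorem linfty_opNorm_le_of_abs_le {T : Matrix n n ℝ} {δ : ℝ} (hT : ∀ i j, |T i j| ≤ δ) :
    ‖T‖ ≤ Fintype.card n * δ := by
  have hδ : 0 ≤ Fintype.card n * δ := by
    rcases isEmpty_or_nonempty n with _ | ⟨⟨i⟩⟩
    · simp
    · exact mul_nonneg (Nat.cast_nonneg _) ((abs_nonneg _).trans (hT i i))
  rw [linfty_opNorm_def, ← NNReal.coe_mk _ hδ, NNReal.coe_le_coe]
  refine Finset.sup_le fun i _ => ?_
  rw [← NNReal.coe_le_coe]
  push_cast
  simpa using Finset.sum_le_sum fun j (_ : j ∈ Finset.univ) => hT i j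

theorem abs_trace_mul_le (R : Matrix n n ℝ) {T : Matrix n n ℝ} {δ : ℝ}
    (hT : ∀ i j, |T i j| ≤ δ) : |(R * T).trace| ≤ Fintype.card n * (‖R‖ * δ) := by
  have hrow : ∀ i, ∑ k, |R i k| ≤ ‖R‖ := fun i => by
    rw [linfty_opNorm_def]
    refine le_of_eq_of_le ?_ (NNReal.coe_le_coe.2 (Finset.le_sup (f := fun i => ∑ k, ‖R i k‖₊)
      (Finset.mem_univ i)))
    simp
  calc |(R * T).trace| ≤ ∑ i, ∑ k, |R i k| * |T k i| := by
        simp only [trace, diag_apply, mul_apply, ← abs_mul]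
        exact (Finset.abs_sum_le_sum_abs _ _).trans
          (Finset.sum_le_sum fun i _ => Finset.abs_sum_le_sum_abs _ _)
    _ ≤ ∑ i, ‖R‖ * δ := Finset.sum_le_sum fun i _ => by
        have hδ : 0 ≤ δ := (abs_nonneg _).trans (hT i i)
        calc ∑ k, |R i k| * |T k i| ≤ ∑ k, |R i k| * δ :=
              Finset.sum_le_sum fun k _ => mul_le_mul_of_nonneg_left (hT k i) (abs_nonneg _)
          _ = (∑ k, |R i k|) * δ := (Finset.sum_mul ..).symm
          _ ≤ ‖R‖ * δ := mul_le_mul_of_nonneg_right (hrow i) hδ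
    _ = Fintype.card n * (‖R‖ * δ) := by simp

variable {T : Matrix n n ℝ} {ε t : ℝ}

theorem linfty_opNorm_smul_le (hε : 0 ≤ ε) (hT : ∀ i j, |T i j| ≤ ε / Fintype.card n)
    (ht : 0 ≤ t) : ‖t • T‖ ≤ t * ε := by
  rw [norm_smul, Real.norm_of_nonneg ht]
  exact mul_le_mul_of_nonneg_left
    ((linfty_opNorm_le_of_abs_le hT).trans (natCast_mul_div_natCast_le _ hε)) ht

theorem isUnit_det_one_sub_smul (hε : 0 ≤ ε) (hT : ∀ i j, |T i j| ≤ ε / Fintype.card n)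
    (ht : 0 ≤ t) (htε : t * ε < 1) : IsUnit (1 - t • T).det :=
  (isUnit_iff_isUnit_det _).1
    (Units.oneSub _ ((linfty_opNorm_smul_le hε hT ht).trans_lt htε)).isUnit

theorem abs_trace_inv_one_sub_smul_mul_le (hε : 0 ≤ ε)
    (hT : ∀ i j, |T i j| ≤ ε / Fintype.card n) (ht : 0 ≤ t) (htε : t * ε < 1) :
    |((1 - t • T)⁻¹ * T).trace| ≤ ε / (1 - t * ε) := by
  have hnorm := linfty_opNorm_smul_le hε hT ht
  have hinv : ‖(1 - t • T)⁻¹‖ ≤ (1 - t * ε)⁻¹ := by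
    rw [nonsing_inv_eq_ringInverse]
    refine (norm_inverse_one_sub_le linfty_opNorm_one_le (hnorm.trans_lt htε)).trans ?_
    gcongr
  calc |((1 - t • T)⁻¹ * T).trace|
      ≤ Fintype.card n * (‖(1 - t • T)⁻¹‖ * (ε / Fintype.card n)) := abs_trace_mul_le _ hT
    _ = ‖(1 - t • T)⁻¹‖ * (Fintype.card n * (ε / Fintype.card n)) := by ring
    _ ≤ (1 - t * ε)⁻¹ * ε := by gcongr; exact natCast_mul_div_natCast_le _ hε
    _ = ε / (1 - t * ε) := by ring

end LinftyNorm

variable {T : Matrix n n ℝ} {ε s : ℝ}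

theorem det_one_sub_smul_mem_Icc (hε : 0 ≤ ε) (hε1 : ε < 1)
    (hT : ∀ i j, |T i j| ≤ ε / Fintype.card n) (hs : s ∈ Icc (0 : ℝ) 1) :
    (1 - s • T).det ∈ Icc (1 - s * ε) (1 - s * ε)⁻¹ := by
  set f := fun t : ℝ => (1 - t • T).det
  have hlt : ∀ t ∈ Icc (0 : ℝ) 1, t * ε < 1 := fun t ht => by nlinarith [ht.1, ht.2]
  have hunit : ∀ t ∈ Icc (0 : ℝ) 1, IsUnit (f t) := fun t ht =>
    isUnit_det_one_sub_smul hε hT ht.1 (hlt t ht)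
  have hderiv : ∀ t ∈ Icc (0 : ℝ) 1,
      HasDerivAt f (-(f t * ((1 - t • T)⁻¹ * T).trace)) t := fun t ht =>
    hasDerivAt_det_one_sub_smul T (hunit t ht)
  have hcont : ContinuousOn f (Icc 0 1) := fun t ht =>
    (hderiv t ht).continuousAt.continuousWithinAt
  have hpos : 0 < f s := isPreconnected_Icc.pos_of_ne_zero hcont (fun t ht => (hunit t ht).ne_zero)
    (left_mem_Icc.2 zero_le_one) (by simp [f]) hs
  have hlog : |Real.log (f s)| ≤ -Real.log (1 - s * ε) := by
    refine image_norm_le_of_norm_deriv_right_le_deriv_boundary'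
      (f' := fun t => -((1 - t • T)⁻¹ * T).trace) (B := fun t => -Real.log (1 - t * ε))
      (B' := fun t => ε / (1 - t * ε))
      (hcont.log fun t ht => (hunit t ht).ne_zero) (fun t ht => ?_) (by simp [f]) ?_ (fun t ht => ?_)
      (fun t ht => ?_) hs
    · have ht' := Ico_subset_Icc_self ht
      convert ((hderiv t ht').log (hunit t ht').ne_zero).hasDerivWithinAt using 1
      field_simp [(hunit t ht').ne_zero]
    · exact (continuousOn_const.sub (continuousOn_id.mul continuousOn_const)).log
        (fun t ht => (sub_pos.2 (hlt t ht)).ne') |>.neg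
    · have hεt := sub_pos.2 (hlt t (Ico_subset_Icc_self ht))
      have hB := ((((hasDerivAt_id t).mul_const ε).const_sub 1).log hεt.ne').neg
      simp only [id, one_mul, neg_div, neg_neg] at hB
      exact hB.hasDerivWithinAt
    · rw [norm_neg, Real.norm_eq_abs]
      exact abs_trace_inv_one_sub_smul_mul_le hε hT ht.1 (hlt t (Ico_subset_Icc_self ht))
  have h1 : 0 < 1 - s * ε := sub_pos.2 (hlt s hs)
  rw [abs_le, neg_neg] at hlog
  refine ⟨(Real.log_le_log_iff h1 hpos).1 hlog.1, (Real.log_le_log_iff hpos (inv_pos.2 h1)).1 ?_⟩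
  rw [Real.log_inv]
  exact hlog.2

end Matrix

theorem one_sub_le_rpow_div_rpow {ε a b : ℝ} (hε0 : 0 ≤ ε) (hε1 : ε ≤ 1) (ha : 1 - ε ≤ a)
    (hb0 : 0 < b) (hb : b ≤ (1 - 2⁻¹ * ε)⁻¹) :
    1 - ε ≤ a ^ ((1 : ℝ) / 4) / b ^ ((1 : ℝ) / 2) := by
  have h0 : 0 ≤ 1 - ε := by linarith
  have h2 : 0 < 1 - 2⁻¹ * ε := by linarith
  have ha0 : 0 ≤ a := h0.trans ha
  calc 1 - ε ≤ (1 - ε) ^ ((3 : ℝ) / 4) :=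
        Real.self_le_rpow_of_le_one h0 (by linarith) (by norm_num)
    _ = (1 - ε) ^ ((1 : ℝ) / 4) * (1 - ε) ^ ((1 : ℝ) / 2) := by
        rw [← Real.rpow_add' h0 (by norm_num)]; norm_num
    _ ≤ a ^ ((1 : ℝ) / 4) * (1 - 2⁻¹ * ε) ^ ((1 : ℝ) / 2) := by
        gcongr; linarith
    _ = a ^ ((1 : ℝ) / 4) / ((1 - 2⁻¹ * ε)⁻¹) ^ ((1 : ℝ) / 2) := by
        rw [Real.inv_rpow h2.le, div_inv_eq_mul]
    _ ≤ a ^ ((1 : ℝ) / 4) / b ^ ((1 : ℝ) / 2) := by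
        gcongr

theorem det_ratio_fidelity_bound_general
    (N : ℕ) (ε : ℝ) (hε : ε ∈ Set.Ioo (0:ℝ) 1)
    (T : Matrix (Fin N) (Fin N) ℝ) (hT : ∀ i j, |T i j| ≤ ε / N) :
    1 - ε ≤ (1 - T).det ∧ 0 < (1 - T).det ∧ 0 < (1 - (2:ℝ)⁻¹ • T).det ∧
      1 - ε ≤ (1 - T).det ^ ((1:ℝ)/4) / (1 - (2:ℝ)⁻¹ • T).det ^ ((1:ℝ)/2) := by
  obtain ⟨hε0, hε1⟩ := hε
  have hT' : ∀ i j, |T i j| ≤ ε / Fintype.card (Fin N) := by simpa using hT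
  have hdet := (det_one_sub_smul_mem_Icc hε0.le hε1 hT' (right_mem_Icc.2 zero_le_one)).1
  have hdet_half := det_one_sub_smul_mem_Icc hε0.le hε1 hT' (s := 2⁻¹) ⟨by norm_num, by norm_num⟩
  rw [one_smul, one_mul] at hdet
  have hpos_half : 0 < (1 - (2:ℝ)⁻¹ • T).det := lt_of_lt_of_le (by linarith) hdet_half.1
  exact ⟨hdet, by linarith, hpos_half,
    one_sub_le_rpow_div_rpow hε0.le hε1.le hdet hpos_half hdet_half.2⟩

/-- Fidelity bound between Gaussian states with inverse-covariance matrices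
A and A(I − T), for T entrywise bounded by ε/N. -/
theorem det_ratio_fidelity_bound
    (N : ℕ) (hN : 0 < N) (ε : ℝ) (hε : ε ∈ Set.Ioo (0:ℝ) 1)
    (T : Matrix (Fin N) (Fin N) ℝ) (hT : ∀ i j, |T i j| ≤ ε / N) :
    1 - ε ≤ (1 - T).det ∧ 0 < (1 - T).det ∧ 0 < (1 - (2:ℝ)⁻¹ • T).det ∧
      1 - ε ≤ (1 - T).det ^ ((1:ℝ)/4) / (1 - (2:ℝ)⁻¹ • T).det ^ ((1:ℝ)/2) :=
  det_ratio_fidelity_bound_general N ε hε T hT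
end

section
/- Let N be a positive integer and let A be a real symmetric positive-definite N×N matrix admitting a decomposition A = U·D·Uᵀ, where U is an upper unit-triangular matrix (U_{ii} = 1 for all i and U_{ij} = 0 for i > j) and D is a diagonal matrix with diagonal entries d_0, …, d_{N−1}. Let λ_min and λ_max denote the smallest and largest eigenvalues of A. Then λ_min ≤ d_i ≤ λ_max for every i; in particular, all d_i are strictly positive and (max_i d_i)/(min_i d_i) ≤ λ_max/λ_min, the condition number of A. -/
/-!
If `A = U D Uᵀ` with `U` unit upper triangular, then for `z`, the `i`-th row of `U⁻¹`, we have
`Uᵀ z = eᵢ`, hence `A z = dᵢ uᵢ` with `uᵢ` the `i`-th column of `U`, and `zᵀ A z = dᵢ`.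
Both `z` and `uᵢ` have `i`-th entry `1`, so both have squared norm at least `1`.
In the Loewner order `λ_min ≤ A` and `A² ≤ λ_max A`; evaluated at `z` these give
`λ_min ≤ λ_min ‖z‖² ≤ dᵢ` and `dᵢ² ≤ dᵢ² ‖uᵢ‖² = ‖A z‖² ≤ λ_max dᵢ`.
-/

open Matrix

namespace Matrix

open scoped MatrixOrder

variable {n : Type*} [Fintype n]

lemma dotProduct_mulVec_le_of_le {B C : Matrix n n ℝ} (h : B ≤ C) (x : n → ℝ) :
    x ⬝ᵥ B *ᵥ x ≤ x ⬝ᵥ C *ᵥ x := by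
  have := (le_iff.mp h).dotProduct_mulVec_nonneg x
  rwa [star_trivial, sub_mulVec, dotProduct_sub, sub_nonneg] at this

lemma one_le_dotProduct_self {x : n → ℝ} {i : n} (hx : x i = 1) : 1 ≤ x ⬝ᵥ x := by
  simpa [hx, dotProduct, sq] using
    Finset.single_le_sum (fun k _ => sq_nonneg (x k)) (Finset.mem_univ i)

lemma IsUpperTriangular.mul_apply_self [LinearOrder n] {M N : Matrix n n ℝ}
    (hM : M.IsUpperTriangular) (hN : N.IsUpperTriangular) (i : n) :
    (M * N) i i = M i i * N i i := by
  rw [mul_apply]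
  refine Finset.sum_eq_single i (fun k _ hk => ?_) (by simp)
  rcases lt_or_gt_of_ne hk with h | h
  · rw [hM h, zero_mul]
  · rw [hN h, mul_zero]

variable [DecidableEq n]

lemma IsHermitian.mul_dotProduct_self_le {A : Matrix n n ℝ} (hA : A.IsHermitian) {c : ℝ}
    (h : ∀ x ∈ spectrum ℝ A, c ≤ x) (v : n → ℝ) : c * (v ⬝ᵥ v) ≤ v ⬝ᵥ A *ᵥ v := by
  have hle : algebraMap ℝ _ c ≤ A := algebraMap_le_of_le_spectrum h hA
  simpa [Algebra.algebraMap_eq_smul_one, smul_mulVec, dotProduct_smul] using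
    dotProduct_mulVec_le_of_le hle v

lemma IsHermitian.mul_self_le_smul {A : Matrix n n ℝ} (hA : A.IsHermitian) {c : ℝ}
    (h : ∀ x ∈ spectrum ℝ A, 0 ≤ x ∧ x ≤ c) : A * A ≤ c • A :=
  calc A * A = A ^ 2 := (sq A).symm
    _ = cfc (· ^ 2 : ℝ → ℝ) A := (cfc_pow_id A 2 hA).symm
    _ ≤ cfc (c * · : ℝ → ℝ) A := cfc_mono fun x hx => by nlinarith [h x hx]
    _ = c • A := cfc_const_mul_id c A hA

lemma IsHermitian.mulVec_dotProduct_mulVec_le {A : Matrix n n ℝ} (hA : A.IsHermitian) {c : ℝ}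
    (h : ∀ x ∈ spectrum ℝ A, 0 ≤ x ∧ x ≤ c) (v : n → ℝ) :
    A *ᵥ v ⬝ᵥ A *ᵥ v ≤ c * (v ⬝ᵥ A *ᵥ v) := by
  have hsymm : v ⬝ᵥ (A * A) *ᵥ v = A *ᵥ v ⬝ᵥ A *ᵥ v := by
    rw [← mulVec_mulVec, dotProduct_mulVec, ← mulVec_transpose,
      (isHermitian_iff_isSymm.mp hA).eq]
  simpa [hsymm, smul_mulVec, dotProduct_smul] using
    dotProduct_mulVec_le_of_le (hA.mul_self_le_smul h) v

section UnitUpperTriangular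

variable [LinearOrder n] {U : Matrix n n ℝ} (hU : U.IsUpperTriangular) (hU1 : ∀ i, U i i = 1)
include hU hU1

lemma IsUpperTriangular.det_eq_one : U.det = 1 := by
  simp [det_of_isUpperTriangular hU, hU1]

lemma IsUpperTriangular.inv_apply_self (i : n) : U⁻¹ i i = 1 := by
  have : Invertible U := invertibleOfIsUnitDet U (by simp [hU.det_eq_one hU1])
  have := IsUpperTriangular.mul_apply_self (blockTriangular_inv_of_blockTriangular hU) hU i
  simpa [inv_mul_of_invertible, hU1] using this.symm

end UnitUpperTriangular

section UDU

variable {A U : Matrix n n ℝ} {d : n → ℝ}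

lemma transpose_mulVec_inv_row (hU : IsUnit U.det) (i : n) :
    Uᵀ *ᵥ U⁻¹.row i = Pi.single i 1 := by
  rw [mulVec_transpose, ← single_one_vecMul, vecMul_vecMul, nonsing_inv_mul U hU, vecMul_one]

variable (hdecomp : A = U * diagonal d * Uᵀ)
include hdecomp

lemma mulVec_inv_row_of_eq_mul_diagonal_mul_transpose (hU : IsUnit U.det) (i : n) :
    A *ᵥ U⁻¹.row i = d i • U.col i := by
  rw [hdecomp, ← mulVec_mulVec, transpose_mulVec_inv_row hU, ← mulVec_mulVec, mulVec_single_one]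
  ext k
  simp [mulVec, dotProduct, diagonal_apply, mul_comm]

lemma inv_row_dotProduct_mulVec_of_eq_mul_diagonal_mul_transpose (hU : IsUnit U.det) (i : n) :
    U⁻¹.row i ⬝ᵥ A *ᵥ U⁻¹.row i = d i := by
  rw [mulVec_inv_row_of_eq_mul_diagonal_mul_transpose hdecomp hU, dotProduct_smul,
    ← mulVec_single_one, dotProduct_mulVec, ← mulVec_transpose, transpose_mulVec_inv_row hU]
  simp

lemma le_apply_of_eq_mul_diagonal_mul_transpose [LinearOrder n] (hA : A.IsHermitian)
    (hU : U.IsUpperTriangular) (hU1 : ∀ i, U i i = 1) {c : ℝ} (hc : 0 ≤ c)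
    (h : ∀ x ∈ spectrum ℝ A, c ≤ x) (i : n) : c ≤ d i := by
  have hdet : IsUnit U.det := by simp [hU.det_eq_one hU1]
  calc c ≤ c * (U⁻¹.row i ⬝ᵥ U⁻¹.row i) :=
        le_mul_of_one_le_right hc (one_le_dotProduct_self (hU.inv_apply_self hU1 i))
    _ ≤ U⁻¹.row i ⬝ᵥ A *ᵥ U⁻¹.row i := hA.mul_dotProduct_self_le h _
    _ = d i := inv_row_dotProduct_mulVec_of_eq_mul_diagonal_mul_transpose hdecomp hdet i

lemma apply_le_of_eq_mul_diagonal_mul_transpose (hA : A.IsHermitian) (hU : IsUnit U.det)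
    (hU1 : ∀ i, U i i = 1) {c : ℝ} (h : ∀ x ∈ spectrum ℝ A, 0 ≤ x ∧ x ≤ c) {i : n}
    (hd : 0 < d i) : d i ≤ c := by
  have hcol : 1 ≤ U.col i ⬝ᵥ U.col i := one_le_dotProduct_self (i := i) (hU1 i)
  have hnorm := hA.mulVec_dotProduct_mulVec_le h (U⁻¹.row i)
  rw [inv_row_dotProduct_mulVec_of_eq_mul_diagonal_mul_transpose hdecomp hU,
    mulVec_inv_row_of_eq_mul_diagonal_mul_transpose hdecomp hU, smul_dotProduct,
    dotProduct_smul, smul_eq_mul, smul_eq_mul] at hnorm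
  refine le_of_mul_le_mul_right ?_ hd
  calc d i * d i = d i * (d i * 1) := by rw [mul_one]
    _ ≤ d i * (d i * (U.col i ⬝ᵥ U.col i)) := by gcongr
    _ ≤ c * d i := hnorm

end UDU

end Matrix

/-- In a UDU decomposition A = U D Uᵀ of a symmetric positive-definite matrix,
the diagonal entries of D lie between the smallest and largest eigenvalues of A;
in particular they are positive and their ratio is at most the condition number. -/
theorem UDU_diagonal_eigenvalue_bounds
    (N : ℕ) (hN : 0 < N) (A U : Matrix (Fin N) (Fin N) ℝ)
    (d : Fin N → ℝ) (hA : A.IsHermitian) (hPD : A.PosDef)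
    (hU1 : ∀ i, U i i = 1) (hU0 : ∀ i j, j < i → U i j = 0)
    (hdecomp : A = U * Matrix.diagonal d * Uᵀ)
    (lmin lmax : ℝ)
    (hmin : IsLeast (Set.range hA.eigenvalues) lmin)
    (hmax : IsGreatest (Set.range hA.eigenvalues) lmax) :
    (∀ i, lmin ≤ d i ∧ d i ≤ lmax) ∧ (∀ i, 0 < d i) ∧
      (Finset.univ.sup' (Finset.univ_nonempty_iff.mpr (Fin.pos_iff_nonempty.mp hN)) d) /
        (Finset.univ.inf' (Finset.univ_nonempty_iff.mpr (Fin.pos_iff_nonempty.mp hN)) d)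
        ≤ lmax / lmin := by
  rw [← hA.spectrum_real_eq_range_eigenvalues] at hmin hmax
  have hspec_pos : ∀ x ∈ spectrum ℝ A, 0 < x := by
    rw [hA.spectrum_real_eq_range_eigenvalues]
    rintro _ ⟨j, rfl⟩
    exact hPD.eigenvalues_pos j
  have hlmin : 0 < lmin := hspec_pos _ hmin.1
  have hU : U.IsUpperTriangular := fun i j h => hU0 i j h
  have hge (i) : lmin ≤ d i :=
    le_apply_of_eq_mul_diagonal_mul_transpose hdecomp hA hU hU1 hlmin.le hmin.2 i
  have hle (i) : d i ≤ lmax :=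
    apply_le_of_eq_mul_diagonal_mul_transpose hdecomp hA (by simp [hU.det_eq_one hU1]) hU1
      (fun x hx => ⟨(hspec_pos x hx).le, hmax.2 hx⟩) (hlmin.trans_le (hge i))
  refine ⟨fun i => ⟨hge i, hle i⟩, fun i => hlmin.trans_le (hge i), ?_⟩
  exact div_le_div₀ (hlmin.le.trans (hmin.2 hmax.1)) (Finset.sup'_le _ _ fun i _ => hle i) hlmin
    (Finset.le_inf' _ _ fun i _ => hge i)
end

section
/- Let t and m be positive integers with 2^m > 8(t+3), let μ ∈ [0,1), and let σ > 0 satisfy σ² ≤ t. Define f(σ, μ, m) := Σ_{j=−2^{m−1}}^{2^{m−1}−1} exp(−(j+μ)²/(2σ²)) and g(σ, μ) := Σ_{j=−2t−1}^{2t} exp(−(j+μ)²/(2σ²)). Then |f(σ, μ, m) − g(σ, μ)| ≤ 2^{−(t+1)}. -/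
private lemma geomA (n : ℕ) : ∀ a : ℤ, ∑ j ∈ Finset.Icc a (a + n), (2:ℝ)^(-j-1) ≤ 2^(-a) := by
  induction n with
  | zero =>
    intro a
    simp only [Nat.cast_zero, add_zero, Finset.Icc_self, Finset.sum_singleton]
    have h : (2:ℝ)^(-a-1) ≤ 2^(-a-1) + 2^(-a-1) := by
      have := zpow_pos (show (0:ℝ) < 2 by norm_num) (-a-1); linarith
    calc (2:ℝ)^(-a-1) ≤ 2^(-a-1) + 2^(-a-1) := h
      _ = 2^(-a) := by
        rw [show (-a : ℤ) = (-a-1) + 1 by ring, zpow_add₀ (by norm_num : (2:ℝ) ≠ 0)]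
        ring
  | succ n ih =>
    intro a
    have h1 : Finset.Icc a (a + ((n:ℤ)+1)) = insert a (Finset.Icc (a+1) (a+1+n)) := by
      ext x; simp only [Finset.mem_Icc, Finset.mem_insert]; omega
    have h2 : Finset.Icc a (a + ((n+1 : ℕ) : ℤ)) = insert a (Finset.Icc (a+1) (a+1+n)) := by
      rw [← h1]; push_cast; ring_nf
    rw [h2, Finset.sum_insert (by simp only [Finset.mem_Icc]; omega)]
    have h3 := ih (a+1)
    have h4 : (2:ℝ)^(-(a+1)) = 2^(-a-1) := by ring_nf
    calc (2:ℝ)^(-a-1) + ∑ j ∈ Finset.Icc (a+1) (a+1+n), (2:ℝ)^(-j-1)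
        ≤ 2^(-a-1) + 2^(-a-1) := by rw [← h4]; linarith
      _ = 2^(-a) := by
        rw [show (-a : ℤ) = (-a-1) + 1 by ring, zpow_add₀ (by norm_num : (2:ℝ) ≠ 0)]
        ring

private lemma geomB (n : ℕ) : ∀ a : ℤ, ∑ j ∈ Finset.Icc a (a + n), (2:ℝ)^j ≤ 2^(a+n+1) := by
  induction n with
  | zero =>
    intro a
    simp only [Nat.cast_zero, add_zero, Finset.Icc_self, Finset.sum_singleton]
    calc (2:ℝ)^a ≤ 2^a + 2^a := by
          have := zpow_pos (show (0:ℝ) < 2 by norm_num) a; linarith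
      _ = 2^(a+1) := by rw [zpow_add₀ (by norm_num : (2:ℝ) ≠ 0)]; ring
  | succ n ih =>
    intro a
    have h2 : Finset.Icc a (a + ((n+1 : ℕ) : ℤ)) = insert (a+n+1) (Finset.Icc a (a+n)) := by
      ext x; simp only [Finset.mem_Icc, Finset.mem_insert]; push_cast; omega
    rw [h2, Finset.sum_insert (by simp only [Finset.mem_Icc]; omega)]
    have h3 := ih a
    have key : (2:ℝ)^(a+(n:ℤ)+1) + 2^(a+(n:ℤ)+1) = 2^(a+((n:ℕ)+1:ℕ)+1) := by
      push_cast
      rw [show (a + ((n:ℤ)+1) + 1 : ℤ) = (a+(n:ℤ)+1) + 1 by ring,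
        zpow_add₀ (by norm_num : (2:ℝ) ≠ 0) (a+(n:ℤ)+1) 1]
      ring
    calc (2:ℝ)^(a+(n:ℤ)+1) + ∑ j ∈ Finset.Icc a (a+(n:ℤ)), (2:ℝ)^j
        ≤ 2^(a+(n:ℤ)+1) + 2^(a+(n:ℤ)+1) := by linarith
      _ = _ := key

private lemma core (j : ℤ) (hj : 0 ≤ j) (r : ℝ) (hr : (j:ℝ)+1 ≤ r) :
    Real.exp (-r) ≤ (2:ℝ)^(-j-1) := by
  obtain ⟨n, rfl⟩ := Int.eq_ofNat_of_zero_le hj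
  have h1 : (2:ℝ)^(-(n:ℤ)-1) = ((2:ℝ)^(n+1))⁻¹ := by
    rw [show (-(n:ℤ)-1 : ℤ) = -((n:ℤ)+1) by ring, zpow_neg]
    norm_cast
  rw [h1, Real.exp_neg]
  apply inv_anti₀ (by positivity)
  have h2 : ((n:ℝ)+1) ≤ r := hr
  have h3 : (2:ℝ)^(n+1) ≤ Real.exp ((n:ℝ)+1) := by
    have : Real.exp ((n:ℝ)+1) = (Real.exp 1)^(n+1) := by
      rw [← Real.exp_nat_mul]; push_cast; ring_nf
    rw [this]
    apply pow_le_pow_left₀ (by norm_num)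
    have := Real.add_one_le_exp 1; linarith
  calc (2:ℝ)^(n+1) ≤ Real.exp ((n:ℝ)+1) := h3
    _ ≤ Real.exp r := Real.exp_le_exp.mpr h2

/-- For small variance (σ² ≤ t), the discrete Gaussian normalization sum is
within 2^{−(t+1)} of its truncation to 4t+2 central terms. -/
theorem discrete_gaussian_norm_approx_truncated
    (t m : ℕ) (ht : 0 < t) (hm : 0 < m)
    (hgrid : 8 * (t + 3) < 2 ^ m) (μ : ℝ) (hμ : μ ∈ Set.Ico (0:ℝ) 1)
    (σ : ℝ) (hσ : 0 < σ) (hσu : σ^2 ≤ (t:ℝ)) :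
    |(∑ j ∈ Finset.Icc (-(2^(m-1)) : ℤ) (2^(m-1) - 1),
        Real.exp (-((j:ℝ) + μ)^2 / (2 * σ^2))) -
      (∑ j ∈ Finset.Icc (-(2 * (t:ℤ) + 1)) (2 * (t:ℤ)),
        Real.exp (-((j:ℝ) + μ)^2 / (2 * σ^2)))|
      ≤ 1 / 2 ^ (t + 1) := by
  obtain ⟨hμ0, hμ1⟩ := hμ
  set e : ℤ → ℝ := fun j => Real.exp (-((j:ℝ) + μ)^2 / (2 * σ^2)) with he
  set N : ℤ := 2^(m-1) with hNdef
  -- N is large enough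
  have hNnat : 2*t + 3 ≤ 2^(m-1) := by
    have hpow : 2^m = 2 * 2^(m-1) := by
      conv_lhs => rw [show m = (m-1)+1 by omega]
      ring
    omega
  have hN : 2*(t:ℤ) + 3 ≤ N := by
    have : ((2*t+3 : ℕ) : ℤ) ≤ ((2^(m-1) : ℕ) : ℤ) := by exact_mod_cast hNnat
    push_cast at this
    omega
  -- split the big sum
  have hsplit : Finset.Icc (-N) (N-1) =
      (Finset.Icc (-N) (-(2*(t:ℤ)+2)) ∪ Finset.Icc (-(2*(t:ℤ)+1)) (2*(t:ℤ)))
        ∪ Finset.Icc (2*(t:ℤ)+1) (N-1) := by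
    ext x
    simp only [Finset.mem_union, Finset.mem_Icc]
    omega
  have hdisj1 : Disjoint (Finset.Icc (-N) (-(2*(t:ℤ)+2))) (Finset.Icc (-(2*(t:ℤ)+1)) (2*(t:ℤ))) := by
    rw [Finset.disjoint_left]
    intro x hx hx'
    simp only [Finset.mem_Icc] at hx hx'
    omega
  have hdisj2 : Disjoint ((Finset.Icc (-N) (-(2*(t:ℤ)+2)) ∪ Finset.Icc (-(2*(t:ℤ)+1)) (2*(t:ℤ))))
      (Finset.Icc (2*(t:ℤ)+1) (N-1)) := by
    rw [Finset.disjoint_left]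
    intro x hx hx'
    simp only [Finset.mem_union, Finset.mem_Icc] at hx hx'
    omega
  have hsum : ∑ j ∈ Finset.Icc (-N) (N-1), e j =
      (∑ j ∈ Finset.Icc (-N) (-(2*(t:ℤ)+2)), e j + ∑ j ∈ Finset.Icc (-(2*(t:ℤ)+1)) (2*(t:ℤ)), e j)
        + ∑ j ∈ Finset.Icc (2*(t:ℤ)+1) (N-1), e j := by
    rw [hsplit, Finset.sum_union hdisj2, Finset.sum_union hdisj1]
  -- pointwise bounds
  have hσ2 : (0:ℝ) < 2 * σ^2 := by positivity
  have htR : (1:ℝ) ≤ (t:ℝ) := by exact_mod_cast ht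
  have hptB : ∀ j ∈ Finset.Icc (2*(t:ℤ)+1) (N-1), e j ≤ (2:ℝ)^(-j-1) := by
    intro j hj
    simp only [Finset.mem_Icc] at hj
    have hj1 : 2*(t:ℤ)+1 ≤ j := hj.1
    have hj0 : (0:ℤ) ≤ j := by omega
    have hjR : 2*(t:ℝ)+1 ≤ (j:ℝ) := by exact_mod_cast hj1
    rw [he]
    have hr : ((j:ℝ)+1) ≤ ((j:ℝ)+μ)^2 / (2*σ^2) := by
      rw [le_div_iff₀ hσ2]
      have h1 : ((j:ℝ))^2 ≤ ((j:ℝ)+μ)^2 := by nlinarith [(show (0:ℝ) ≤ (j:ℝ) by exact_mod_cast hj0)]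
      have hjnn : (0:ℝ) ≤ (j:ℝ) := by exact_mod_cast hj0
      nlinarith
    have := core j hj0 (((j:ℝ)+μ)^2 / (2*σ^2)) hr
    simpa [neg_div] using this
  have hptA : ∀ j ∈ Finset.Icc (-N) (-(2*(t:ℤ)+2)), e j ≤ (2:ℝ)^j := by
    intro j hj
    simp only [Finset.mem_Icc] at hj
    set k : ℤ := -j-1 with hk
    have hk1 : 2*(t:ℤ)+1 ≤ k := by omega
    have hk0 : (0:ℤ) ≤ k := by omega
    have hkR : 2*(t:ℝ)+1 ≤ (k:ℝ) := by exact_mod_cast hk1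
    have hknn : (0:ℝ) ≤ (k:ℝ) := by exact_mod_cast hk0
    have hjk : ((j:ℝ)) = -((k:ℝ))-1 := by
      have : (j:ℤ) = -k-1 := by omega
      exact_mod_cast congrArg (Int.cast : ℤ → ℝ) this
    rw [he]
    have hr : ((k:ℝ)+1) ≤ ((j:ℝ)+μ)^2 / (2*σ^2) := by
      rw [le_div_iff₀ hσ2]
      have h1 : ((k:ℝ))^2 ≤ ((j:ℝ)+μ)^2 := by
        rw [hjk]; nlinarith
      nlinarith
    have hcore := core k hk0 (((j:ℝ)+μ)^2 / (2*σ^2)) hr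
    have h2 : (2:ℝ)^(-k-1) = (2:ℝ)^j := by
      congr 1; omega
    rw [← h2]
    simpa [neg_div] using hcore
  -- bound tail sum B
  have hB : ∑ j ∈ Finset.Icc (2*(t:ℤ)+1) (N-1), e j ≤ (2:ℝ)^(-(2*(t:ℤ)+1)) := by
    calc ∑ j ∈ Finset.Icc (2*(t:ℤ)+1) (N-1), e j
        ≤ ∑ j ∈ Finset.Icc (2*(t:ℤ)+1) (N-1), (2:ℝ)^(-j-1) := Finset.sum_le_sum hptB
      _ ≤ (2:ℝ)^(-(2*(t:ℤ)+1)) := by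
          have hn : (N - 1 : ℤ) = (2*(t:ℤ)+1) + ((N - 1 - (2*(t:ℤ)+1)).toNat : ℤ) := by
            rw [Int.toNat_of_nonneg (by omega)]; ring
          rw [hn]
          exact geomA _ _
  -- bound tail sum A
  have hA : ∑ j ∈ Finset.Icc (-N) (-(2*(t:ℤ)+2)), e j ≤ (2:ℝ)^(-(2*(t:ℤ)+1)) := by
    calc ∑ j ∈ Finset.Icc (-N) (-(2*(t:ℤ)+2)), e j
        ≤ ∑ j ∈ Finset.Icc (-N) (-(2*(t:ℤ)+2)), (2:ℝ)^j := Finset.sum_le_sum hptA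
      _ ≤ (2:ℝ)^(-(2*(t:ℤ)+1)) := by
          have hgb := geomB ((-(2*(t:ℤ)+2) + N).toNat) (-N)
          have hn : (-N : ℤ) + ((-(2*(t:ℤ)+2) + N).toNat : ℤ) = -(2*(t:ℤ)+2) := by
            rw [Int.toNat_of_nonneg (by omega)]; ring
          rw [hn] at hgb
          calc ∑ j ∈ Finset.Icc (-N) (-(2*(t:ℤ)+2)), (2:ℝ)^j ≤ 2^(-(2*(t:ℤ)+2)+1) := hgb
            _ = (2:ℝ)^(-(2*(t:ℤ)+1)) := by congr 1 <;> ring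
  -- nonnegativity of tails
  have hAnn : (0:ℝ) ≤ ∑ j ∈ Finset.Icc (-N) (-(2*(t:ℤ)+2)), e j :=
    Finset.sum_nonneg fun j _ => Real.exp_nonneg _
  have hBnn : (0:ℝ) ≤ ∑ j ∈ Finset.Icc (2*(t:ℤ)+1) (N-1), e j :=
    Finset.sum_nonneg fun j _ => Real.exp_nonneg _
  -- put together
  have habs : |(∑ j ∈ Finset.Icc (-N) (N-1), e j) - ∑ j ∈ Finset.Icc (-(2*(t:ℤ)+1)) (2*(t:ℤ)), e j|
      = ∑ j ∈ Finset.Icc (-N) (-(2*(t:ℤ)+2)), e j + ∑ j ∈ Finset.Icc (2*(t:ℤ)+1) (N-1), e j := by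
    rw [hsum]
    rw [abs_of_nonneg (by linarith)]
    ring
  rw [habs]
  have hfinal : (2:ℝ)^(-(2*(t:ℤ)+1)) + (2:ℝ)^(-(2*(t:ℤ)+1)) ≤ 1 / 2^(t+1) := by
    have h1 : (2:ℝ)^(-(2*(t:ℤ)+1)) + (2:ℝ)^(-(2*(t:ℤ)+1)) = (2:ℝ)^(-(2*(t:ℤ))) := by
      rw [show (-(2*(t:ℤ)) : ℤ) = (-(2*(t:ℤ)+1)) + 1 by ring,
        zpow_add₀ (by norm_num : (2:ℝ) ≠ 0)]
      ring
    rw [h1]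
    have h2 : (2:ℝ)^(-(2*(t:ℤ))) ≤ (2:ℝ)^(-((t:ℤ)+1)) := by
      apply zpow_le_zpow_right₀ (by norm_num)
      omega
    have h3 : (2:ℝ)^(-((t:ℤ)+1)) = 1 / 2^(t+1) := by
      rw [zpow_neg, one_div]
      congr 1
      all_goals rw [show ((t:ℤ)+1) = ((t+1 : ℕ) : ℤ) by push_cast; ring, zpow_natCast]
    linarith [h3 ▸ h2]
  linarith
end

section
/- Let t be a positive integer, let ℓ be an integer with ℓ ≥ 4^t, and let x ∈ [0, t]. Define P(y) := 1 − y + y². Then |e^{−x} − (P(x/ℓ))^ℓ| ≤ 4^{−t}. -/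
/-!
For `y = x / ℓ ∈ [0, 1]` the quadratic truncation is sandwiched as
`e^{-y} ≤ 1 - y + y² ≤ e^{y² - y}`, so `(P(x/ℓ))^ℓ` lies between `e^{-x}` and `e^{-x + x²/ℓ}`.
The width of that window is `e^{-x} (e^{x²/ℓ} - 1) ≤ (4/3) x² e^{-x} / ℓ ≤ 1/ℓ`, using
`x²/ℓ ≤ 1/4` (from `4 t² ≤ 4^t ≤ ℓ`) and `x² e^{-x} ≤ 3/4`.
-/

open Real

lemma Nat.two_mul_le_two_pow (n : ℕ) : 2 * n ≤ 2 ^ n := by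
  induction n with
  | zero => simp
  | succ n ih =>
    rw [pow_succ]
    have : 1 ≤ 2 ^ n := Nat.one_le_two_pow
    omega

lemma Nat.four_mul_sq_le_four_pow (n : ℕ) : 4 * n ^ 2 ≤ 4 ^ n := by
  calc 4 * n ^ 2 = (2 * n) ^ 2 := by ring
    _ ≤ (2 ^ n) ^ 2 := Nat.pow_le_pow_left (Nat.two_mul_le_two_pow n) 2
    _ = 4 ^ n := by rw [← pow_mul, mul_comm, pow_mul]; norm_num

lemma sq_mul_exp_neg_le {x : ℝ} (hx : 0 ≤ x) : x ^ 2 * exp (-x) ≤ 3 / 4 := by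
  have htaylor : 1 + x + x ^ 2 / 2 + x ^ 3 / 6 + x ^ 4 / 24 ≤ exp x := by
    simpa [Finset.sum_range_succ, Nat.factorial] using sum_le_exp_of_nonneg hx 5
  have hsq : x ^ 2 ≤ 3 / 4 * exp x := by
    nlinarith [sq_nonneg (x - 2), sq_nonneg (x ^ 2 - 2 * x), mul_nonneg hx (sq_nonneg (x - 2))]
  rwa [exp_neg, ← div_eq_mul_inv, div_le_iff₀ (exp_pos x)]

lemma exp_sub_one_le_of_le_quarter {u : ℝ} (hu₀ : 0 ≤ u) (hu : u ≤ 1 / 4) :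
    exp u - 1 ≤ 4 / 3 * u := by
  have h := exp_bound_div_one_sub_of_interval hu₀ (by linarith)
  rw [le_div_iff₀ (by linarith)] at h
  nlinarith [exp_pos u]

lemma exp_neg_le_one_sub_add_sq {y : ℝ} (hy₀ : 0 ≤ y) (hy₁ : y ≤ 1) :
    exp (-y) ≤ 1 - y + y ^ 2 := by
  have h := abs_exp_sub_one_sub_id_le (x := -y) (by rwa [abs_neg, abs_of_nonneg hy₀])
  linarith [(abs_le.mp h).2, neg_sq y]

lemma one_sub_add_sq_le_exp (y : ℝ) : 1 - y + y ^ 2 ≤ exp (y ^ 2 - y) := by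
  linarith [add_one_le_exp (y ^ 2 - y)]

lemma exp_sq_div_sub_sub_exp_neg_le {x L : ℝ} (hx : 0 ≤ x) (hL : 0 < L) (hxL : 4 * x ^ 2 ≤ L) :
    exp (x ^ 2 / L - x) - exp (-x) ≤ 1 / L := by
  have hu₀ : 0 ≤ x ^ 2 / L := by positivity
  have hu : x ^ 2 / L ≤ 1 / 4 := by rw [div_le_iff₀ hL]; linarith
  calc exp (x ^ 2 / L - x) - exp (-x) = (exp (x ^ 2 / L) - 1) * exp (-x) := by
        rw [sub_eq_add_neg (x ^ 2 / L), exp_add]; ring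
    _ ≤ 4 / 3 * (x ^ 2 / L) * exp (-x) := by
        gcongr; exact exp_sub_one_le_of_le_quarter hu₀ hu
    _ = 4 / 3 * (x ^ 2 * exp (-x)) / L := by ring
    _ ≤ 4 / 3 * (3 / 4) / L := by gcongr; exact sq_mul_exp_neg_le hx
    _ = 1 / L := by norm_num

lemma abs_exp_neg_sub_one_sub_add_sq_pow_le {n : ℕ} (hn : 0 < n) {x : ℝ} (hx : 0 ≤ x)
    (hxn : 4 * x ^ 2 ≤ n) : |exp (-x) - (1 - x / n + (x / n) ^ 2) ^ n| ≤ 1 / (n : ℝ) := by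
  have hn' : (0 : ℝ) < n := by exact_mod_cast hn
  have hy₀ : 0 ≤ x / n := by positivity
  have hy₁ : x / n ≤ 1 := by
    rw [div_le_one hn']
    nlinarith [show (1 : ℝ) ≤ n by exact_mod_cast hn]
  have hlower : exp (-x) ≤ (1 - x / n + (x / n) ^ 2) ^ n := by
    calc exp (-x) = exp (-(x / n)) ^ n := by
          rw [← exp_nat_mul]; congr 1; field_simp
      _ ≤ _ := by gcongr; exact exp_neg_le_one_sub_add_sq hy₀ hy₁
  have hupper : (1 - x / n + (x / n) ^ 2) ^ n ≤ exp (x ^ 2 / n - x) := by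
    calc (1 - x / n + (x / n) ^ 2) ^ n ≤ exp ((x / n) ^ 2 - x / n) ^ n := by
          gcongr; exact one_sub_add_sq_le_exp _
      _ = exp (x ^ 2 / n - x) := by
          rw [← exp_nat_mul]; congr 1; field_simp
  rw [abs_sub_comm, abs_of_nonneg (sub_nonneg.mpr hlower)]
  linarith [exp_sq_div_sub_sub_exp_neg_le hx hn' hxn]

theorem exp_approx_by_iterated_squares_general
    (t : ℕ) (ℓ : ℤ) (hℓ : (4:ℤ) ^ t ≤ ℓ) (x : ℝ)
    (hx : x ∈ Set.Icc (0:ℝ) (t:ℝ)) :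
    |Real.exp (-x) - (1 - x / (ℓ:ℝ) + (x / (ℓ:ℝ))^2) ^ ℓ| ≤ 1 / 4 ^ t := by
  obtain ⟨hx₀, hxt⟩ := hx
  lift ℓ to ℕ using (pow_nonneg (by norm_num) t).trans hℓ with n
  rw [zpow_natCast, Int.cast_natCast]
  have hn : (4 : ℝ) ^ t ≤ n := by exact_mod_cast hℓ
  have hxn : 4 * x ^ 2 ≤ n := by
    have ht : 4 * (t : ℝ) ^ 2 ≤ 4 ^ t := by exact_mod_cast Nat.four_mul_sq_le_four_pow t
    nlinarith
  have hn₀ : 0 < n := by exact_mod_cast (by positivity : (0 : ℤ) < 4 ^ t).trans_le hℓ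
  exact (abs_exp_neg_sub_one_sub_add_sq_pow_le hn₀ hx₀ hxn).trans
    (one_div_le_one_div_of_le (by positivity) hn)

/-- Approximation of e^{−x} by iterated powers of the quadratic Taylor
truncation P(y) = 1 − y + y². -/
theorem exp_approx_by_iterated_squares
    (t : ℕ) (ht : 0 < t) (ℓ : ℤ) (hℓ : (4:ℤ) ^ t ≤ ℓ) (x : ℝ)
    (hx : x ∈ Set.Icc (0:ℝ) (t:ℝ)) :
    |Real.exp (-x) - (1 - x / (ℓ:ℝ) + (x / (ℓ:ℝ))^2) ^ ℓ| ≤ 1 / 4 ^ t :=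
  exp_approx_by_iterated_squares_general t ℓ hℓ x hx
end

section
/- Let σ ≥ 1 be a real number, let μ ∈ [0,1), and let m be an integer with m ≥ 2. Define f(σ, μ, m) := Σ_{j=−2^{m−1}}^{2^{m−1}−1} exp(−(j+μ)²/(2σ²)). Then |2·f(σ/2, μ/2, m−1)/f(σ, μ, m) − 1| ≤ 1/2. -/
/-!
Write `g j = exp (-(j + μ)² / (2σ²))`. Since `g (2k)` is the `k`-th summand of
`f(σ/2, μ/2, m-1)`, the quantity is `(E - O) / (E + O)`, where `E` and `O` are the sums of `g`
over the even and the odd `j`. As `-μ ∈ (-1, 0]`, the sequences `g 0, g 1, …` and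
`g (-1), g (-2), …` both decrease, and the alternating sum of a decreasing nonnegative sequence lies
between `0` and its first term; so `|E - O| ≤ max (g 0) (g (-1))`. For `σ ≥ 1`, `exp t ≥ 1 + t`
gives `g j ≤ g (j - 1) + g (j + 1)`, so `E + O ≥ g (-2) + g (-1) + g 0 + g 1` is at least twice
that maximum.
-/

open Finset Real

theorem Finset.sum_range_two_mul {M : Type*} [AddCommMonoid M] (f : ℕ → M) (n : ℕ) :
    ∑ i ∈ range (2 * n), f i = ∑ k ∈ range n, (f (2 * k) + f (2 * k + 1)) := by
  induction n with
  | zero => simp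
  | succ n ih =>
    rw [show 2 * (n + 1) = 2 * n + 1 + 1 by ring, sum_range_succ, sum_range_succ, ih,
      sum_range_succ, add_assoc]

theorem Finset.sum_Icc_neg_eq_sum_range {M : Type*} [AddCommMonoid M] (F : ℤ → M) (n : ℕ) :
    ∑ j ∈ Icc (-(n : ℤ)) (n - 1), F j = ∑ i ∈ range n, (F i + F (-1 - i)) := by
  induction n with
  | zero => simp
  | succ n ih =>
    have hIcc : Icc (-((n + 1 : ℕ) : ℤ)) ((n + 1 : ℕ) - 1)
        = insert (-1 - (n : ℤ)) (insert (n : ℤ) (Icc (-(n : ℤ)) (n - 1))) := by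
      ext j; simp only [mem_Icc, mem_insert]; omega
    rw [hIcc, sum_insert (by simp only [mem_Icc, mem_insert]; omega),
      sum_insert (by simp only [mem_Icc]; omega), ih, sum_range_succ]
    abel

section AlternatingPairs

variable {α : Type*} [AddCommGroup α] [PartialOrder α] [IsOrderedAddMonoid α] {f : ℕ → α}

theorem Antitone.sum_range_sub_nonneg (hf : Antitone f) (n : ℕ) :
    0 ≤ ∑ k ∈ range n, (f (2 * k) - f (2 * k + 1)) :=
  sum_nonneg fun _ _ => sub_nonneg.2 (hf (Nat.le_succ _))

theorem Antitone.sum_range_sub_add_le (hf : Antitone f) (n : ℕ) :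
    ∑ k ∈ range n, (f (2 * k) - f (2 * k + 1)) + f (2 * n) ≤ f 0 := by
  induction n with
  | zero => simp
  | succ n ih =>
    have hstep : f (2 * (n + 1)) ≤ f (2 * n + 1) := hf (by omega)
    calc ∑ k ∈ range (n + 1), (f (2 * k) - f (2 * k + 1)) + f (2 * (n + 1))
        ≤ ∑ k ∈ range (n + 1), (f (2 * k) - f (2 * k + 1)) + f (2 * n + 1) := by gcongr
      _ = ∑ k ∈ range n, (f (2 * k) - f (2 * k + 1)) + f (2 * n) := by
        rw [sum_range_succ]; abel
      _ ≤ f 0 := ih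

end AlternatingPairs

/-- `u` and `v` are the two flanks of a unimodal sequence, read outwards from its peak; the
numerator collects the terms of even position in `…, v 1, v 0, u 0, u 1, …` (with `u 0` even). -/
theorem abs_two_mul_div_sub_one_le_half {u v : ℕ → ℝ} (hu : Antitone u) (hv : Antitone v)
    (hu_pos : ∀ i, 0 < u i) (hv_pos : ∀ i, 0 < v i)
    (huv : u 0 ≤ v 0 + u 1) (hvu : v 0 ≤ u 0 + v 1) {n : ℕ} (hn : 1 ≤ n) :
    |2 * (∑ k ∈ range n, (u (2 * k) + v (2 * k + 1))) / (∑ i ∈ range (2 * n), (u i + v i)) - 1|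
      ≤ 1 / 2 := by
  set T := ∑ i ∈ range (2 * n), (u i + v i) with hT_def
  have hT : T = ∑ k ∈ range n, (u (2 * k) + u (2 * k + 1) + (v (2 * k) + v (2 * k + 1))) := by
    rw [hT_def, sum_range_two_mul]
    exact sum_congr rfl fun _ _ => by ring
  have hdiff : 2 * (∑ k ∈ range n, (u (2 * k) + v (2 * k + 1))) - T
      = ∑ k ∈ range n, (u (2 * k) - u (2 * k + 1))
        - ∑ k ∈ range n, (v (2 * k) - v (2 * k + 1)) := by
    rw [hT, mul_sum, ← sum_sub_distrib, ← sum_sub_distrib]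
    exact sum_congr rfl fun _ _ => by ring
  have hT_ge : u 0 + u 1 + (v 0 + v 1) ≤ T := by
    rw [hT]
    refine single_le_sum (f := fun k => u (2 * k) + u (2 * k + 1) + (v (2 * k) + v (2 * k + 1)))
      (fun k _ => ?_) (mem_range.2 hn)
    linarith [hu_pos (2 * k), hu_pos (2 * k + 1), hv_pos (2 * k), hv_pos (2 * k + 1)]
  have hT_pos : 0 < T := by linarith [hu_pos 0, hu_pos 1, hv_pos 0, hv_pos 1]
  rw [div_sub_one hT_pos.ne', hdiff, abs_div, abs_of_pos hT_pos, div_le_iff₀ hT_pos, abs_le]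
  constructor <;> linarith [hu.sum_range_sub_nonneg n, hv.sum_range_sub_nonneg n,
    hu.sum_range_sub_add_le n, hv.sum_range_sub_add_le n, hu_pos (2 * n), hv_pos (2 * n),
    hu_pos 1, hv_pos 1]

noncomputable def gaussianWeight (σ μ x : ℝ) : ℝ := exp (-(x + μ) ^ 2 / (2 * σ ^ 2))

namespace gaussianWeight

variable {σ μ : ℝ}

theorem pos (x : ℝ) : 0 < gaussianWeight σ μ x := exp_pos _

theorem half (x : ℝ) : gaussianWeight (σ / 2) (μ / 2) x = gaussianWeight σ μ (2 * x) := by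
  unfold gaussianWeight; ring_nf

theorem le_of_sq_le {x y : ℝ} (h : (y + μ) ^ 2 ≤ (x + μ) ^ 2) :
    gaussianWeight σ μ x ≤ gaussianWeight σ μ y :=
  exp_le_exp.2 (div_le_div_of_nonneg_right (neg_le_neg h) (by positivity))

theorem antitoneOn : AntitoneOn (gaussianWeight σ μ) (Set.Ici (-μ)) := fun x hx y _ hxy =>
  le_of_sq_le (pow_le_pow_left₀ (by linarith [Set.mem_Ici.1 hx]) (by linarith) 2)

theorem monotoneOn : MonotoneOn (gaussianWeight σ μ) (Set.Iic (-μ)) := fun x _ y hy hxy =>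
  le_of_sq_le (by nlinarith [Set.mem_Iic.1 hy])

theorem le_add_neighbours (hσ : 1 ≤ σ ^ 2) (x : ℝ) :
    gaussianWeight σ μ x ≤ gaussianWeight σ μ (x - 1) + gaussianWeight σ μ (x + 1) := by
  have hratio : ∀ y, gaussianWeight σ μ y
      = gaussianWeight σ μ x * exp (((x + μ) ^ 2 - (y + μ) ^ 2) / (2 * σ ^ 2)) := fun y => by
    unfold gaussianWeight; rw [← exp_add]; congr 1; ring
  rw [hratio (x - 1), hratio (x + 1), ← mul_add]
  refine le_mul_of_one_le_right (pos x).le ?_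
  have hsum : ((x + μ) ^ 2 - (x - 1 + μ) ^ 2) / (2 * σ ^ 2)
      + ((x + μ) ^ 2 - (x + 1 + μ) ^ 2) / (2 * σ ^ 2) = -(1 / σ ^ 2) := by
    field_simp; ring
  have hinv : 1 / σ ^ 2 ≤ 1 := (div_le_one (by positivity)).2 hσ
  linarith [add_one_le_exp (((x + μ) ^ 2 - (x - 1 + μ) ^ 2) / (2 * σ ^ 2)),
    add_one_le_exp (((x + μ) ^ 2 - (x + 1 + μ) ^ 2) / (2 * σ ^ 2))]

end gaussianWeight

/-- The argument of the arcsine in the rotation angle for Gaussian-state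
generation is bounded by 1/2. -/
theorem rotation_angle_arg_bound
    (σ μ : ℝ) (hσ : 1 ≤ σ) (hμ : μ ∈ Set.Ico (0:ℝ) 1)
    (m : ℕ) (hm : 2 ≤ m) :
    |2 * (∑ j ∈ Finset.Icc (-(2^(m-2)) : ℤ) (2^(m-2) - 1),
        Real.exp (-((j:ℝ) + μ/2)^2 / (2 * (σ/2)^2))) /
      (∑ j ∈ Finset.Icc (-(2^(m-1)) : ℤ) (2^(m-1) - 1),
        Real.exp (-((j:ℝ) + μ)^2 / (2 * σ^2))) - 1| ≤ 1/2 := by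
  obtain ⟨hμ0, hμ1⟩ := hμ
  obtain ⟨k, rfl⟩ : ∃ k, m = k + 2 := ⟨m - 2, by omega⟩
  have hM : (2 : ℤ) ^ (k + 2 - 2) = ((2 ^ k : ℕ) : ℤ) := by push_cast; rfl
  have hN : (2 : ℤ) ^ (k + 2 - 1) = ((2 * 2 ^ k : ℕ) : ℤ) := by push_cast; rw [← pow_succ']
  rw [hM, hN]
  have hn : 1 ≤ 2 ^ k := Nat.one_le_two_pow
  generalize 2 ^ k = n at hn ⊢
  change |2 * (∑ j ∈ Icc (-(n : ℤ)) (n - 1), gaussianWeight (σ / 2) (μ / 2) j)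
      / (∑ j ∈ Icc (-((2 * n : ℕ) : ℤ)) ((2 * n : ℕ) - 1), gaussianWeight σ μ j) - 1| ≤ 1 / 2
  simp only [sum_Icc_neg_eq_sum_range, gaussianWeight.half]
  have hσ2 : 1 ≤ σ ^ 2 := one_le_pow₀ hσ
  have hu : Antitone fun i : ℕ => gaussianWeight σ μ i := fun i j hij =>
    gaussianWeight.antitoneOn (Set.mem_Ici.2 (by linarith)) (Set.mem_Ici.2 (by linarith))
      (Nat.cast_le.2 hij)
  have hv : Antitone fun i : ℕ => gaussianWeight σ μ (-1 - i) := fun i j hij =>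
    gaussianWeight.monotoneOn (Set.mem_Iic.2 (by linarith)) (Set.mem_Iic.2 (by linarith))
      (sub_le_sub_left (Nat.cast_le.2 hij) _)
  have hpeak_zero := gaussianWeight.le_add_neighbours (μ := μ) hσ2 0
  have hpeak_neg_one := gaussianWeight.le_add_neighbours (μ := μ) hσ2 (-1)
  have key := abs_two_mul_div_sub_one_le_half hu hv (fun _ => gaussianWeight.pos _)
    (fun _ => gaussianWeight.pos _) (by simpa using hpeak_zero)
    (by simpa [add_comm] using hpeak_neg_one) hn
  push_cast at key ⊢
  convert key using 8
  ring
end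

section
/- Let t be a positive integer and let x be a real number with |x| ≤ 1/2. Then |arcsin(x) − Σ_{ℓ=0}^{t−1} ( (binomial(2ℓ, ℓ)/4^ℓ) · x^{2ℓ+1}/(2ℓ+1) )| ≤ 2^{−(2t+1)}. -/
/-!
Write `c ℓ = (2ℓ choose ℓ) / 4 ^ ℓ`. The binomial series `1 / √(1 - u) = ∑ c ℓ u ^ ℓ` shows that
the derivative of the error `E x = arcsin x - ∑_{ℓ < t} c ℓ x ^ (2ℓ+1) / (2ℓ+1)` is the tail
`∑_{ℓ ≥ t} c ℓ x ^ 2ℓ`. Since `0 ≤ c ℓ ≤ 1`, this tail lies between `0` and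
`x ^ 2t / (1 - x ^ 2) ≤ (4/3) x ^ 2t` for `|x| ≤ 1/2`. Comparing `E` with the antiderivative
`(4/3) x ^ (2t+1) / (2t+1)` through monotonicity gives
`|E x| ≤ (4/3) |x| ^ (2t+1) / (2t+1) ≤ (4/9) 2 ^ -(2t+1)` once `t ≥ 1`.
-/

open Finset Nat

theorem ascPochhammer_eval_half (n : ℕ) :
    (ascPochhammer ℝ n).eval (1 / 2) = n ! * n.centralBinom / 4 ^ n := by
  induction n with
  | zero => simp
  | succ n ih =>
    have hrec : ((n + 1 : ℕ) : ℝ) * (n + 1).centralBinom = 2 * (2 * n + 1) * n.centralBinom := by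
      exact_mod_cast Nat.succ_mul_centralBinom_succ n
    rw [ascPochhammer_succ_eval, ih, factorial_succ, pow_succ]
    push_cast at hrec ⊢
    field_simp
    linear_combination -2 * hrec

theorem Ring.multichoose_half (n : ℕ) :
    Ring.multichoose (1 / 2 : ℝ) n = n.centralBinom / 4 ^ n := by
  have h := Ring.factorial_nsmul_multichoose_eq_ascPochhammer (1 / 2 : ℝ) n
  rw [Polynomial.ascPochhammer_smeval_eq_eval, ascPochhammer_eval_half, nsmul_eq_mul] at h
  have : (n ! : ℝ) ≠ 0 := by positivity
  field_simp at h ⊢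
  linear_combination h

theorem hasSum_centralBinom_div_four_pow_mul_pow {u : ℝ} (hu : |u| < 1) :
    HasSum (fun n ↦ (n.centralBinom / 4 ^ n : ℝ) * u ^ n) (1 / √(1 - u)) := by
  have h := (Real.one_div_one_sub_rpow_hasFPowerSeriesOnBall_zero (1 / 2)).hasSum
    (y := u) (by simpa [enorm_eq_nnnorm, ← NNReal.coe_lt_coe] using hu)
  simp only [FormalMultilinearSeries.ofScalars_apply_eq, smul_eq_mul, zero_add] at h
  simpa only [← Ring.multichoose_eq, Ring.multichoose_half, Real.sqrt_eq_rpow] using h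

theorem centralBinom_div_four_pow_le_one (n : ℕ) : (n.centralBinom / 4 ^ n : ℝ) ≤ 1 := by
  rw [div_le_one (by positivity)]
  exact_mod_cast centralBinom_le_four_pow n

theorem one_div_sqrt_one_sub_sub_sum_range_mem_Icc {u : ℝ} (hu₀ : 0 ≤ u) (hu₁ : u < 1) (t : ℕ) :
    1 / √(1 - u) - ∑ ℓ ∈ range t, (ℓ.centralBinom / 4 ^ ℓ : ℝ) * u ^ ℓ ∈
      Set.Icc 0 (u ^ t / (1 - u)) := by
  have htail := (hasSum_nat_add_iff' t).mpr
    (hasSum_centralBinom_div_four_pow_mul_pow (abs_lt.2 ⟨by linarith, hu₁⟩))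
  have hgeom := (hasSum_geometric_of_lt_one hu₀ hu₁).mul_left (u ^ t)
  rw [← div_eq_mul_inv] at hgeom
  refine ⟨htail.nonneg fun n ↦ by positivity, hasSum_le (fun n ↦ ?_) htail hgeom⟩
  rw [← pow_add, add_comm t]
  exact mul_le_of_le_one_left (by positivity) (centralBinom_div_four_pow_le_one _)

theorem hasDerivAt_mul_pow_div (a : ℝ) (n : ℕ) (x : ℝ) :
    HasDerivAt (fun x ↦ a * x ^ (2 * n + 1) / (2 * n + 1 : ℝ)) (a * x ^ (2 * n)) x := by
  refine (((hasDerivAt_pow (2 * n + 1) x).const_mul a).div_const _).congr_deriv ?_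
  rw [Nat.add_sub_cancel]
  push_cast
  field_simp

theorem hasDerivAt_arcsin_sub_sum_range {x : ℝ} (hx : |x| < 1) (t : ℕ) :
    HasDerivAt (fun x ↦ Real.arcsin x -
        ∑ ℓ ∈ range t, (ℓ.centralBinom / 4 ^ ℓ : ℝ) * x ^ (2 * ℓ + 1) / (2 * ℓ + 1 : ℝ))
      (1 / √(1 - x ^ 2) - ∑ ℓ ∈ range t, (ℓ.centralBinom / 4 ^ ℓ : ℝ) * x ^ (2 * ℓ)) x := by
  obtain ⟨hx₁, hx₂⟩ := abs_lt.1 hx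
  exact (Real.hasDerivAt_arcsin hx₁.ne' hx₂.ne).sub
    (HasDerivAt.fun_sum fun ℓ _ ↦ hasDerivAt_mul_pow_div _ ℓ x)

theorem one_div_sqrt_one_sub_sq_sub_sum_range_mem_Icc {x : ℝ} (hx : |x| ≤ 1 / 2) (t : ℕ) :
    1 / √(1 - x ^ 2) - ∑ ℓ ∈ range t, (ℓ.centralBinom / 4 ^ ℓ : ℝ) * x ^ (2 * ℓ) ∈
      Set.Icc 0 (4 / 3 * x ^ (2 * t)) := by
  have hx_sq : x ^ 2 ≤ 1 / 4 := by nlinarith [sq_abs x, abs_nonneg x]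
  simp only [pow_mul]
  obtain ⟨h₀, h₁⟩ := one_div_sqrt_one_sub_sub_sum_range_mem_Icc (sq_nonneg x) (by linarith) t
  refine ⟨h₀, h₁.trans ?_⟩
  rw [div_le_iff₀ (by linarith)]
  nlinarith [pow_nonneg (sq_nonneg x) t]

theorem abs_sub_le_abs_sub_of_hasDerivAt {f g f' g' : ℝ → ℝ} {D : Set ℝ} (hD : Convex ℝ D)
    (hf : ∀ x ∈ D, HasDerivAt f (f' x) x) (hg : ∀ x ∈ D, HasDerivAt g (g' x) x)
    (hf'₀ : ∀ x ∈ D, 0 ≤ f' x) (hf'g' : ∀ x ∈ D, f' x ≤ g' x) {a b : ℝ} (ha : a ∈ D)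
    (hb : b ∈ D) : |f b - f a| ≤ |g b - g a| := by
  have hmono : ∀ {h h' : ℝ → ℝ}, (∀ x ∈ D, HasDerivAt h (h' x) x) → (∀ x ∈ D, 0 ≤ h' x) →
      MonotoneOn h D := fun hh hh' ↦
    monotoneOn_of_hasDerivWithinAt_nonneg hD (fun x hx ↦ (hh x hx).continuousAt.continuousWithinAt)
      (fun x hx ↦ (hh x (interior_subset hx)).hasDerivWithinAt)
      (fun x hx ↦ hh' x (interior_subset hx))
  have hf_mono := hmono hf hf'₀
  have hgf_mono := hmono (fun x hx ↦ (hg x hx).sub (hf x hx)) (fun x hx ↦ sub_nonneg.2 (hf'g' x hx))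
  rcases le_total a b with hab | hba
  · have h₁ := hf_mono ha hb hab
    have h₂ : g a - f a ≤ g b - f b := hgf_mono ha hb hab
    rw [abs_of_nonneg (by linarith), abs_of_nonneg (by linarith)]
    linarith
  · have h₁ := hf_mono hb ha hba
    have h₂ : g b - f b ≤ g a - f a := hgf_mono hb ha hba
    rw [abs_of_nonpos (by linarith), abs_of_nonpos (by linarith)]
    linarith

theorem abs_four_div_three_mul_pow_div_le {t : ℕ} (ht : 0 < t) {x : ℝ} (hx : |x| ≤ 1 / 2) :
    |4 / 3 * x ^ (2 * t + 1) / (2 * t + 1 : ℝ)| ≤ 1 / 2 ^ (2 * t + 1) := by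
  have ht₃ : (3 : ℝ) ≤ 2 * t + 1 := by
    have : (1 : ℝ) ≤ t := by exact_mod_cast ht
    linarith
  have hx_pow : |x| ^ (2 * t + 1) ≤ 1 / 2 ^ (2 * t + 1) := by
    simpa [div_pow] using pow_le_pow_left₀ (abs_nonneg x) hx (2 * t + 1)
  rw [abs_div, abs_mul, abs_pow, abs_of_pos (by positivity : (0 : ℝ) < 2 * t + 1),
    div_le_iff₀ (by positivity)]
  calc |(4 / 3 : ℝ)| * |x| ^ (2 * t + 1) ≤ 4 / 3 * (1 / 2 ^ (2 * t + 1)) := by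
        rw [abs_of_pos (by norm_num)]; gcongr
    _ ≤ 1 / 2 ^ (2 * t + 1) * (2 * t + 1) := by
        rw [mul_comm]; gcongr; linarith

/-- The degree-(2t−1) Maclaurin truncation of arcsin approximates arcsin(x)
to within 2^{−(2t+1)} for |x| ≤ 1/2. -/
theorem arcsin_maclaurin_truncation_bound
    (t : ℕ) (ht : 0 < t) (x : ℝ) (hx : |x| ≤ 1/2) :
    |Real.arcsin x - ∑ ℓ ∈ Finset.range t,
        ((Nat.choose (2*ℓ) ℓ : ℝ) / 4 ^ ℓ) * x ^ (2*ℓ+1) / (2*ℓ+1 : ℝ)|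
      ≤ 1 / 2 ^ (2*t+1) := by
  have hderiv := fun s (hs : s ∈ Set.Icc (-(1 / 2) : ℝ) (1 / 2)) ↦
    one_div_sqrt_one_sub_sq_sub_sum_range_mem_Icc (abs_le.2 hs) t
  have key := abs_sub_le_abs_sub_of_hasDerivAt (convex_Icc (-(1 / 2) : ℝ) (1 / 2))
    (fun s hs ↦ hasDerivAt_arcsin_sub_sum_range (by linarith [abs_le.2 hs]) t)
    (fun s _ ↦ hasDerivAt_mul_pow_div (4 / 3) t s) (fun s hs ↦ (hderiv s hs).1)
    (fun s hs ↦ (hderiv s hs).2) (a := 0) (b := x) (by norm_num) (abs_le.1 hx)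
  simp only [Real.arcsin_zero, ne_eq, Nat.add_one_ne_zero, not_false_eq_true, zero_pow, mul_zero,
    zero_div, sum_const_zero, sub_zero] at key
  exact key.trans (abs_four_div_three_mul_pow_div_le ht hx)
end

section
/- Let m₀ > 1 and s ≥ m₀ be real numbers, and let J be an integer with J ≥ 2. Then ( Σ_{j=−J}^{J−1} exp(−j²/(2s)) )^{−1/2} ≤ exp(−1/(4m₀)). -/
/-- The fidelity between the all-zero state and a discrete Gaussian state with
variance parameter s ≥ m₀ > 1 is at most exp(−1/(4m₀)). -/
theorem all_zero_fidelity_bound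
    (m₀ s : ℝ) (hm : 1 < m₀) (hs : m₀ ≤ s) (J : ℤ) (hJ : 2 ≤ J) :
    (∑ j ∈ Finset.Icc (-J) (J-1), Real.exp (-(j:ℝ)^2 / (2*s))) ^ (-(1:ℝ)/2)
      ≤ Real.exp (-1 / (4*m₀)) := by
  have hs1 : (1:ℝ) < s := lt_of_lt_of_le hm hs
  have hexp2 : Real.exp (1/2) < 2 := by
    have h := Real.log_two_gt_d9
    calc Real.exp (1/2) < Real.exp (Real.log 2) := by
          apply Real.exp_lt_exp.mpr; linarith
      _ = 2 := Real.exp_log (by norm_num)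
  -- lower bound on the sum
  have hsub : ({-1, 0, 1} : Finset ℤ) ⊆ Finset.Icc (-J) (J-1) := by
    intro x hx
    simp only [Finset.mem_insert, Finset.mem_singleton] at hx
    rcases hx with h | h | h <;> subst h <;> simp [Finset.mem_Icc] <;> omega
  have hterm : Real.exp (1/2) ≤ 2 * Real.exp (-(1:ℝ)^2 / (2*s)) + 1 := by
    have h1 : Real.exp (-(1:ℝ)/2) ≤ Real.exp (-(1:ℝ)^2 / (2*s)) := by
      apply Real.exp_le_exp.mpr
      rw [div_le_div_iff₀ (by norm_num) (by linarith)]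
      nlinarith
    have h2 : (1:ℝ)/2 ≤ Real.exp (-(1:ℝ)/2) := by
      have hmul : Real.exp (-(1:ℝ)/2) * Real.exp (1/2) = 1 := by
        rw [← Real.exp_add]; norm_num
      nlinarith [Real.exp_pos (-(1:ℝ)/2)]
    linarith
  have hS : Real.exp (1/2) ≤
      ∑ j ∈ Finset.Icc (-J) (J-1), Real.exp (-(j:ℝ)^2 / (2*s)) := by
    have hle : ∑ j ∈ ({-1, 0, 1} : Finset ℤ), Real.exp (-(j:ℝ)^2 / (2*s)) ≤
        ∑ j ∈ Finset.Icc (-J) (J-1), Real.exp (-(j:ℝ)^2 / (2*s)) := by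
      apply Finset.sum_le_sum_of_subset_of_nonneg hsub
      intro _ _ _; exact (Real.exp_pos _).le
    have hcalc : ∑ j ∈ ({-1, 0, 1} : Finset ℤ), Real.exp (-(j:ℝ)^2 / (2*s))
        = 2 * Real.exp (-(1:ℝ)^2 / (2*s)) + 1 := by
      rw [show ({-1, 0, 1} : Finset ℤ) = {-1} ∪ {0} ∪ {1} by rfl]
      rw [Finset.sum_union (by decide), Finset.sum_union (by decide)]
      simp [Real.exp_zero]
      ring
    linarith [hcalc ▸ hle]
  have hkey : Real.exp (1/(2*m₀)) ≤
      ∑ j ∈ Finset.Icc (-J) (J-1), Real.exp (-(j:ℝ)^2 / (2*s)) := by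
    refine le_trans (Real.exp_le_exp.mpr ?_) hS
    rw [div_le_div_iff₀ (by linarith) (by norm_num)]
    nlinarith
  calc (∑ j ∈ Finset.Icc (-J) (J-1), Real.exp (-(j:ℝ)^2 / (2*s))) ^ (-(1:ℝ)/2)
      ≤ Real.exp (1/(2*m₀)) ^ (-(1:ℝ)/2) :=
        Real.rpow_le_rpow_of_nonpos (Real.exp_pos _) hkey (by norm_num)
    _ = Real.exp (-1 / (4*m₀)) := by
        rw [← Real.exp_mul]
        congr 1
        field_simp
        ring
end

section
/- Let σ ≥ 1 be a real number and let μ be a real number. Then |Σ_{j∈ℤ} exp(−(j+μ)²/(2σ²)) − σ·√(2π)| ≤ exp(−π²·σ²). -/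
/-!
Poisson summation turns the shifted Gaussian sum into `σ√(2π)` times the theta series
`∑ₖ exp(-2π²σ²k² + 2πiμk)`, whose `k = 0` term is `1` and whose other terms have modulus at most
`q^|k|` with `q = exp(-2π²σ²) = exp(-π²σ²)²`. The error is therefore at most
`σ√(2π) · 2q/(1 - q)`, which for `σ ≥ 1` is far below `exp(-π²σ²)`.
-/

open Real Complex

theorem norm_tsum_int_sub_apply_zero_le {E : Type*} [NormedAddCommGroup E] [CompleteSpace E]
    {f : ℤ → E} {q : ℝ} (hq : q < 1) (hf : ∀ n, ‖f n‖ ≤ q ^ n.natAbs) :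
    ‖∑' n, f n - f 0‖ ≤ 2 * q / (1 - q) := by
  have hq0 : 0 ≤ q := by simpa using (norm_nonneg _).trans (hf 1)
  have geom : HasSum (fun n : ℕ ↦ q ^ (n + 1)) (q / (1 - q)) := by
    simpa only [pow_succ', div_eq_mul_inv] using (hasSum_geometric_of_lt_one hq0 hq).mul_left q
  have pos (n : ℕ) : ‖f (n + 1)‖ ≤ q ^ (n + 1) := mod_cast hf (n + 1)
  have neg (n : ℕ) : ‖f (-(n + 1))‖ ≤ q ^ (n + 1) := by
    convert hf (-(n + 1)) using 2
    omega
  rw [tsum_of_add_one_of_neg_add_one (geom.summable.of_norm_bounded pos)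
    (geom.summable.of_norm_bounded neg), add_sub_right_comm, add_sub_cancel_right]
  calc _ ≤ q / (1 - q) + q / (1 - q) :=
        (norm_add_le _ _).trans (add_le_add (tsum_of_norm_bounded geom pos)
          (tsum_of_norm_bounded geom neg))
    _ = 2 * q / (1 - q) := by ring

theorem norm_jacobiTheta₂_sub_one_le {z τ : ℂ} (hz : z.im = 0) (hτ : 0 < τ.im) :
    ‖jacobiTheta₂ z τ - 1‖ ≤ 2 * rexp (-π * τ.im) / (1 - rexp (-π * τ.im)) := by
  have h0 : jacobiTheta₂_term 0 z τ = 1 := by simp [jacobiTheta₂_term]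
  refine h0 ▸ norm_tsum_int_sub_apply_zero_le (exp_lt_one_iff.mpr (by nlinarith [pi_pos]))
    fun n ↦ ?_
  calc ‖jacobiTheta₂_term n z τ‖ = ‖jacobiTheta₂_term n 0 τ‖ := by
        rw [norm_jacobiTheta₂_term, norm_jacobiTheta₂_term, hz, zero_im]
    _ ≤ _ := by simpa [jacobiTheta₂_term] using norm_exp_mul_sq_le hτ n

theorem tsum_exp_neg_add_sq_div_eq_mul_jacobiTheta₂ {σ : ℝ} (hσ : 0 < σ) (μ : ℝ) :
    ((∑' j : ℤ, rexp (-((j : ℝ) + μ) ^ 2 / (2 * σ ^ 2)) : ℝ) : ℂ) =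
      σ * √(2 * π) * jacobiTheta₂ μ (2 * π * σ ^ 2 * I) := by
  set a : ℂ := ((2 * π * σ ^ 2 : ℝ) : ℂ)
  have ha : 0 < a.re := by simp only [a, ofReal_re]; positivity
  have hsqrt : a ^ (1 / 2 : ℂ) = ((σ * √(2 * π) : ℝ) : ℂ) := by
    rw [show (1 / 2 : ℂ) = ((1 / 2 : ℝ) : ℂ) by norm_num, ← ofReal_cpow (by positivity),
      ← sqrt_eq_rpow, sqrt_mul' _ (sq_nonneg σ), sqrt_sq hσ.le, mul_comm]
  have hlhs (n : ℤ) : cexp (-π * a * n ^ 2 + 2 * π * (-I * μ) * n) =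
      jacobiTheta₂_term n (-μ) (2 * π * σ ^ 2 * I) := by
    rw [jacobiTheta₂_term]
    push_cast [a]
    congr 1
    linear_combination (-2 * π ^ 2 * σ ^ 2 * n ^ 2) * I_sq
  have hrhs (n : ℤ) : cexp (-π / a * (n + I * (-I * μ)) ^ 2) =
      ((rexp (-((n : ℝ) + μ) ^ 2 / (2 * σ ^ 2)) : ℝ) : ℂ) := by
    rw [ofReal_exp, show I * (-I * μ) = μ by linear_combination (-μ : ℂ) * I_sq]
    push_cast [a]
    field_simp
  have hpoisson := Complex.tsum_exp_neg_quadratic ha (-I * μ)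
  rw [tsum_congr hlhs, tsum_congr hrhs, ← ofReal_tsum, hsqrt] at hpoisson
  have hne : ((σ * √(2 * π) : ℝ) : ℂ) ≠ 0 := ofReal_ne_zero.mpr (by positivity)
  rw [← jacobiTheta₂_neg_left, jacobiTheta₂, hpoisson]
  field_simp
  push_cast
  ring

theorem mul_exp_neg_pi_sq_mul_sq_le {σ : ℝ} (hσ : 1 ≤ σ) : σ * rexp (-π ^ 2 * σ ^ 2) ≤ 1 / 10 := by
  have hexp : σ ≤ rexp (σ - 1) := by linarith [add_one_le_exp (σ - 1)]
  have hπ : 9 ≤ π ^ 2 := by nlinarith [pi_gt_three]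
  calc σ * rexp (-π ^ 2 * σ ^ 2) ≤ rexp (σ - 1) * rexp (-π ^ 2 * σ ^ 2) := by gcongr
    _ = rexp (σ - 1 - π ^ 2 * σ ^ 2) := by rw [← Real.exp_add]; ring_nf
    _ ≤ rexp (-9) := exp_le_exp.mpr (by nlinarith)
    _ ≤ 1 / 10 := by
        rw [Real.exp_neg, one_div]
        gcongr
        linarith [add_one_le_exp (9 : ℝ)]

theorem mul_sqrt_two_pi_mul_theta_tail_le {σ : ℝ} (hσ : 1 ≤ σ) :
    σ * √(2 * π) * (2 * rexp (-π ^ 2 * σ ^ 2) ^ 2 / (1 - rexp (-π ^ 2 * σ ^ 2) ^ 2)) ≤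
      rexp (-π ^ 2 * σ ^ 2) := by
  set r := rexp (-π ^ 2 * σ ^ 2)
  have hr0 : 0 < r := exp_pos _
  have hσr : σ * r ≤ 1 / 10 := mul_exp_neg_pi_sq_mul_sq_le hσ
  have hr : r ≤ 1 / 10 := (le_mul_of_one_le_left hr0.le hσ).trans hσr
  have hsqrt : √(2 * π) ≤ 3 := sqrt_le_iff.mpr ⟨by norm_num, by nlinarith [pi_lt_d2]⟩
  rw [mul_div_assoc', div_le_iff₀ (by nlinarith)]
  calc σ * √(2 * π) * (2 * r ^ 2) = 2 * √(2 * π) * (σ * r) * r := by ring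
    _ ≤ 2 * 3 * (1 / 10) * r := by gcongr
    _ ≤ r * (1 - r ^ 2) := by nlinarith

/-- The shifted Gaussian theta sum over ℤ is within exp(−π²σ²) of σ√(2π). -/
theorem shifted_gaussian_sum_approx
    (σ μ : ℝ) (hσ : 1 ≤ σ) :
    |(∑' j : ℤ, Real.exp (-((j:ℝ) + μ)^2 / (2*σ^2))) - σ * Real.sqrt (2*Real.pi)|
      ≤ Real.exp (-Real.pi^2 * σ^2) := by
  have hσ0 : 0 < σ := one_pos.trans_le hσ
  have him : (2 * π * σ ^ 2 * I).im = 2 * π * σ ^ 2 := by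
    rw [mul_I_im]; norm_cast
  have hq : rexp (-π * (2 * π * σ ^ 2)) = rexp (-π ^ 2 * σ ^ 2) ^ 2 := by
    rw [← Real.exp_nat_mul]; ring_nf
  have htail := norm_jacobiTheta₂_sub_one_le (ofReal_im μ) (by rw [him]; positivity)
  rw [him, hq] at htail
  calc |_ - σ * √(2 * π)| = σ * √(2 * π) * ‖jacobiTheta₂ μ (2 * π * σ ^ 2 * I) - 1‖ := by
        rw [← Real.norm_eq_abs, ← norm_real, ofReal_sub,
          tsum_exp_neg_add_sq_div_eq_mul_jacobiTheta₂ hσ0, ofReal_mul, ← mul_sub_one, norm_mul,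
          ← ofReal_mul, norm_real, norm_of_nonneg (by positivity)]
    _ ≤ σ * √(2 * π) * (2 * rexp (-π ^ 2 * σ ^ 2) ^ 2 / (1 - rexp (-π ^ 2 * σ ^ 2) ^ 2)) := by
        gcongr
    _ ≤ _ := mul_sqrt_two_pi_mul_theta_tail_le hσ
end
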